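/- arXiv:1511.00187 — 8 statements merged into one kernel-verified Lean document; each statement's English description precedes it below -/
import Mathlib

section
/- Let {a_ν} be a non-negative decreasing sequence, α > 0, λ ∈ ℝ, and p ≥ 1. Then there exists C > 0 depending only on α, λ, p such that for all positive integers n, m with m ≥ 16n, ∑_{μ=n}^{m} μ^{α-1} (∑_{ν=μ}^{m} a_ν ν^λ)^p ≥ C ∑_{μ=8n}^{m} μ^{α-1} (a_μ μ^{λ+1})^p. -/
open Finset

lemma aux_rpow (x y t : ℝ) (hy : 0 < y) (hyx : y ≤ x) (hxy : x ≤ 2 * y) :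
    (2 : ℝ) ^ (-|t|) * x ^ t ≤ y ^ t := by
  have hx : 0 < x := hy.trans_le hyx
  rcases le_or_gt 0 t with ht | ht
  · rw [abs_of_nonneg ht]
    have h1 : ((2:ℝ) ^ (-t)) * x ^ t = (x / 2) ^ t := by
      rw [Real.div_rpow hx.le (by norm_num), Real.rpow_neg (by norm_num)]
      ring
    rw [h1]
    exact Real.rpow_le_rpow (by positivity) (by linarith) ht
  · rw [abs_of_neg ht, neg_neg]
    have h1 : (2:ℝ) ^ t ≤ 1 := Real.rpow_le_one_of_one_le_of_nonpos (by norm_num) ht.le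
    have h2 : x ^ t ≤ y ^ t := Real.rpow_le_rpow_of_nonpos hy hyx ht.le
    have h3 : (0:ℝ) ≤ x ^ t := (Real.rpow_pos_of_pos hx t).le
    nlinarith

theorem stmt_8 (α lam p : ℝ) (hα : 0 < α) (hp : 1 ≤ p) :
    ∃ C : ℝ, 0 < C ∧ ∀ a : ℕ → ℝ, (∀ ν, 0 ≤ a ν) → (∀ ν, a (ν + 1) ≤ a ν) →
      ∀ n m : ℕ, 1 ≤ n → 16 * n ≤ m →
        C * ∑ μ ∈ Icc (8 * n) m, (μ : ℝ) ^ (α - 1) * (a μ * (μ : ℝ) ^ (lam + 1)) ^ p ≤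
          ∑ μ ∈ Icc n m, (μ : ℝ) ^ (α - 1) * (∑ ν ∈ Icc μ m, a ν * (ν : ℝ) ^ lam) ^ p := by
  set c : ℝ := (2:ℝ) ^ (-|α - 1|) * ((2:ℝ) ^ (-(1 + |lam|))) ^ p with hc
  have hcpos : 0 < c := by positivity
  refine ⟨c / 2, by positivity, ?_⟩
  intro a ha hdec n m hn hm
  have hanti : Antitone a := antitone_nat_of_succ_le hdec
  set T : ℕ → ℝ := fun k => (k:ℝ) ^ (α - 1) * (∑ ν ∈ Icc k m, a ν * (ν:ℝ) ^ lam) ^ p with hT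
  have hTnonneg : ∀ k, 0 ≤ T k := by
    intro k
    have h1 : (0:ℝ) ≤ ∑ ν ∈ Icc k m, a ν * (ν:ℝ) ^ lam := by
      apply Finset.sum_nonneg
      intro ν _
      have : (0:ℝ) ≤ (ν:ℝ) ^ lam := Real.rpow_nonneg (Nat.cast_nonneg ν) lam
      exact mul_nonneg (ha ν) this
    have h2 : (0:ℝ) ≤ (k:ℝ) ^ (α - 1) := Real.rpow_nonneg (Nat.cast_nonneg k) _
    exact mul_nonneg h2 (Real.rpow_nonneg h1 p)
  set f : ℕ → ℕ := fun μ => (μ + 1) / 2 with hf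
  -- pointwise bound
  have key : ∀ μ ∈ Icc (8 * n) m,
      c * ((μ:ℝ) ^ (α - 1) * (a μ * (μ:ℝ) ^ (lam + 1)) ^ p) ≤ T (f μ) := by
    intro μ hμ
    rw [Finset.mem_Icc] at hμ
    have hμ8 : 8 ≤ μ := le_trans (by omega) hμ.1
    have hμpos : (0:ℝ) < μ := by positivity
    set k : ℕ := (μ + 1) / 2 with hk
    have hk1 : 1 ≤ k := by omega
    have hkμ : k ≤ μ := by omega
    have h2k : μ ≤ 2 * k := by omega
    have hkpos : (0:ℝ) < k := by exact_mod_cast Nat.pos_of_ne_zero (by omega)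
    -- the inner sum bound
    have hrlam : ∀ ν ∈ Icc k μ, (2:ℝ) ^ (-|lam|) * (μ:ℝ) ^ lam * a μ ≤ a ν * (ν:ℝ) ^ lam := by
      intro ν hν
      rw [Finset.mem_Icc] at hν
      have hνpos : (0:ℝ) < ν := by
        have : 1 ≤ ν := le_trans hk1 hν.1
        exact_mod_cast this
      have h1 : (2:ℝ) ^ (-|lam|) * (μ:ℝ) ^ lam ≤ (ν:ℝ) ^ lam := by
        apply aux_rpow _ _ _ hνpos
        · exact_mod_cast hν.2
        · have : (μ:ℝ) ≤ 2 * k := by exact_mod_cast h2k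
          have h2 : (k:ℝ) ≤ ν := by exact_mod_cast hν.1
          linarith
      have haν : a μ ≤ a ν := hanti hν.2
      have hl : (0:ℝ) ≤ (2:ℝ) ^ (-|lam|) * (μ:ℝ) ^ lam := by positivity
      calc (2:ℝ) ^ (-|lam|) * (μ:ℝ) ^ lam * a μ ≤ (ν:ℝ) ^ lam * a ν := by
            apply mul_le_mul h1 haν (ha μ) (Real.rpow_nonneg hνpos.le lam)
        _ = a ν * (ν:ℝ) ^ lam := by ring
    have hcard : ((μ + 1 - k : ℕ) : ℝ) ≥ (μ:ℝ) / 2 := by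
      have : μ ≤ 2 * (μ + 1 - k) := by omega
      have h := Nat.cast_le (α := ℝ).2 this
      push_cast at h ⊢
      linarith
    have hsum1 : (μ:ℝ) / 2 * ((2:ℝ) ^ (-|lam|) * (μ:ℝ) ^ lam * a μ) ≤
        ∑ ν ∈ Icc k μ, a ν * (ν:ℝ) ^ lam := by
      calc (μ:ℝ) / 2 * ((2:ℝ) ^ (-|lam|) * (μ:ℝ) ^ lam * a μ)
          ≤ ((μ + 1 - k : ℕ) : ℝ) * ((2:ℝ) ^ (-|lam|) * (μ:ℝ) ^ lam * a μ) := by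
            apply mul_le_mul_of_nonneg_right hcard (mul_nonneg (by positivity) (ha μ))
        _ = ∑ ν ∈ Icc k μ, (2:ℝ) ^ (-|lam|) * (μ:ℝ) ^ lam * a μ := by
            rw [Finset.sum_const, Nat.card_Icc]
            simp [nsmul_eq_mul]
        _ ≤ ∑ ν ∈ Icc k μ, a ν * (ν:ℝ) ^ lam := Finset.sum_le_sum hrlam
    have hsub : Icc k μ ⊆ Icc k m := Finset.Icc_subset_Icc_right hμ.2
    have hsum2 : ∑ ν ∈ Icc k μ, a ν * (ν:ℝ) ^ lam ≤ ∑ ν ∈ Icc k m, a ν * (ν:ℝ) ^ lam := by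
      apply Finset.sum_le_sum_of_subset_of_nonneg hsub
      intro ν _ _
      exact mul_nonneg (ha ν) (Real.rpow_nonneg (Nat.cast_nonneg ν) lam)
    have hbase : (2:ℝ) ^ (-(1 + |lam|)) * (a μ * (μ:ℝ) ^ (lam + 1)) ≤
        ∑ ν ∈ Icc k m, a ν * (ν:ℝ) ^ lam := by
      have heq : (2:ℝ) ^ (-(1 + |lam|)) * (a μ * (μ:ℝ) ^ (lam + 1)) =
          (μ:ℝ) / 2 * ((2:ℝ) ^ (-|lam|) * (μ:ℝ) ^ lam * a μ) := by
        rw [Real.rpow_add hμpos, Real.rpow_one, neg_add, Real.rpow_add (by norm_num : (0:ℝ) < 2),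
          Real.rpow_neg_one]
        ring
      rw [heq]
      exact hsum1.trans hsum2
    -- raise to power p
    have hpow : ((2:ℝ) ^ (-(1 + |lam|))) ^ p * (a μ * (μ:ℝ) ^ (lam + 1)) ^ p ≤
        (∑ ν ∈ Icc k m, a ν * (ν:ℝ) ^ lam) ^ p := by
      have hb0 : (0:ℝ) ≤ (2:ℝ) ^ (-(1 + |lam|)) * (a μ * (μ:ℝ) ^ (lam + 1)) := by
        have : (0:ℝ) ≤ a μ * (μ:ℝ) ^ (lam + 1) :=
          mul_nonneg (ha μ) (Real.rpow_nonneg hμpos.le _)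
        positivity
      have := Real.rpow_le_rpow hb0 hbase (le_trans zero_le_one hp)
      rwa [Real.mul_rpow (by positivity)
        (mul_nonneg (ha μ) (Real.rpow_nonneg hμpos.le _))] at this
    have halpha : (2:ℝ) ^ (-|α - 1|) * (μ:ℝ) ^ (α - 1) ≤ (k:ℝ) ^ (α - 1) := by
      apply aux_rpow _ _ _ hkpos
      · exact_mod_cast hkμ
      · exact_mod_cast h2k
    have hTk : T (f μ) = (k:ℝ) ^ (α - 1) * (∑ ν ∈ Icc k m, a ν * (ν:ℝ) ^ lam) ^ p := rfl
    rw [hTk, hc]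
    calc (2:ℝ) ^ (-|α - 1|) * ((2:ℝ) ^ (-(1 + |lam|))) ^ p *
          ((μ:ℝ) ^ (α - 1) * (a μ * (μ:ℝ) ^ (lam + 1)) ^ p)
        = ((2:ℝ) ^ (-|α - 1|) * (μ:ℝ) ^ (α - 1)) *
          (((2:ℝ) ^ (-(1 + |lam|))) ^ p * (a μ * (μ:ℝ) ^ (lam + 1)) ^ p) := by ring
      _ ≤ (k:ℝ) ^ (α - 1) * (∑ ν ∈ Icc k m, a ν * (ν:ℝ) ^ lam) ^ p := by
          apply mul_le_mul halpha hpow ?_ (Real.rpow_nonneg hkpos.le _)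
          have : (0:ℝ) ≤ (a μ * (μ:ℝ) ^ (lam + 1)) ^ p :=
            Real.rpow_nonneg (mul_nonneg (ha μ) (Real.rpow_nonneg hμpos.le _)) p
          positivity
  -- counting: sum of T ∘ f over Icc (8n) m ≤ 2 * sum of T over Icc n m
  have himg : ∀ t : Finset ℕ, t ⊆ Icc (8 * n) m → Set.InjOn f t →
      ∑ μ ∈ t, T (f μ) ≤ ∑ μ' ∈ Icc n m, T μ' := by
    intro t hsub hinj
    rw [← Finset.sum_image hinj]
    apply Finset.sum_le_sum_of_subset_of_nonneg
    · intro y hy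
      rw [Finset.mem_image] at hy
      obtain ⟨x, hx, rfl⟩ := hy
      have := Finset.mem_Icc.1 (hsub hx)
      rw [Finset.mem_Icc]
      simp only [hf]
      omega
    · intro i _ _
      exact hTnonneg i
  have hcount : ∑ μ ∈ Icc (8 * n) m, T (f μ) ≤ 2 * ∑ μ' ∈ Icc n m, T μ' := by
    rw [← Finset.sum_filter_add_sum_filter_not (Icc (8 * n) m) (fun μ => Even μ)
      (fun μ => T (f μ)), two_mul]
    apply add_le_add
    · apply himg _ (Finset.filter_subset _ _)
      intro x hx y hy hxy
      simp only [Finset.coe_filter, Set.mem_setOf_eq] at hx hy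
      obtain ⟨cx, hcx⟩ := hx.2
      obtain ⟨cy, hcy⟩ := hy.2
      simp only [hf] at hxy
      omega
    · apply himg _ (Finset.filter_subset _ _)
      intro x hx y hy hxy
      simp only [Finset.coe_filter, Set.mem_setOf_eq, Nat.not_even_iff_odd] at hx hy
      obtain ⟨cx, hcx⟩ := hx.2
      obtain ⟨cy, hcy⟩ := hy.2
      simp only [hf] at hxy
      omega
  have hmain : ∑ μ ∈ Icc (8 * n) m,
      c * ((μ:ℝ) ^ (α - 1) * (a μ * (μ:ℝ) ^ (lam + 1)) ^ p) ≤ 2 * ∑ μ' ∈ Icc n m, T μ' :=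
    le_trans (Finset.sum_le_sum key) hcount
  rw [← Finset.mul_sum] at hmain
  have hfin : ∑ μ' ∈ Icc n m, T μ' =
      ∑ μ ∈ Icc n m, (μ : ℝ) ^ (α - 1) * (∑ ν ∈ Icc μ m, a ν * (ν : ℝ) ^ lam) ^ p := rfl
  rw [hfin] at hmain
  linarith
end

section
/- Let {a_ν} be a non-negative decreasing sequence, α > 0, λ ∈ ℝ, and p ≥ 1. Then there exists C > 0 depending only on α, λ, p such that for all positive integers n, m with m ≥ 16n, ∑_{μ=n}^{m} μ^{-α-1} (∑_{ν=n}^{μ} a_ν ν^λ)^p ≥ C ∑_{μ=4n}^{m} μ^{-α-1} (a_μ μ^{λ+1})^p. -/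
open Finset

theorem stmt_9 (α lam p : ℝ) (hα : 0 < α) (hp : 1 ≤ p) :
    ∃ C : ℝ, 0 < C ∧ ∀ a : ℕ → ℝ, (∀ ν, 0 ≤ a ν) → (∀ ν, a (ν + 1) ≤ a ν) →
      ∀ n m : ℕ, 1 ≤ n → 16 * n ≤ m →
        C * ∑ μ ∈ Icc (4 * n) m, (μ : ℝ) ^ (-α - 1) * (a μ * (μ : ℝ) ^ (lam + 1)) ^ p ≤
          ∑ μ ∈ Icc n m, (μ : ℝ) ^ (-α - 1) * (∑ ν ∈ Icc n μ, a ν * (ν : ℝ) ^ lam) ^ p := by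
  have h2 : (0:ℝ) < 2 := by norm_num
  set d : ℝ := (2:ℝ) ^ (-(max lam 0)) with hd
  have hdpos : 0 < d := Real.rpow_pos_of_pos h2 _
  set c : ℝ := d / 2 with hc
  have hcpos : 0 < c := by positivity
  refine ⟨c ^ p, Real.rpow_pos_of_pos hcpos p, ?_⟩
  intro a ha hdec n m hn hm
  have hanti : Antitone a := antitone_nat_of_succ_le hdec
  have hp0 : (0:ℝ) ≤ p := le_trans zero_le_one hp
  have key : ∀ μ ∈ Icc (4*n) m,
      c ^ p * ((μ:ℝ) ^ (-α-1) * (a μ * (μ:ℝ) ^ (lam+1)) ^ p)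
      ≤ (μ:ℝ) ^ (-α-1) * (∑ ν ∈ Icc n μ, a ν * (ν:ℝ) ^ lam) ^ p := by
    intro μ hμ
    obtain ⟨h4n, hμm⟩ := mem_Icc.mp hμ
    have hμ4 : 4 ≤ μ := by omega
    have hμR : (0:ℝ) < μ := by exact_mod_cast Nat.lt_of_lt_of_le (by norm_num) hμ4
    set k := (μ + 1) / 2 with hk
    have hkn : n ≤ k := by omega
    have hkpos : 0 < k := by omega
    -- pointwise lower bound on terms in Icc k μ
    have hterm : ∀ ν ∈ Icc k μ, a μ * (d * (μ:ℝ) ^ lam) ≤ a ν * (ν:ℝ) ^ lam := by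
      intro ν hν
      obtain ⟨hkν, hνμ⟩ := mem_Icc.mp hν
      have hνpos : (0:ℝ) < ν := by exact_mod_cast Nat.lt_of_lt_of_le hkpos hkν
      have hν2 : (μ:ℝ) ≤ 2 * ν := by exact_mod_cast (by omega : μ ≤ 2 * ν)
      have hνμR : (ν:ℝ) ≤ μ := by exact_mod_cast hνμ
      have hdμ : d * (μ:ℝ) ^ lam ≤ (ν:ℝ) ^ lam := by
        rcases le_or_gt 0 lam with hl | hl
        · have hdeq : d = ((2:ℝ)⁻¹) ^ lam := by
            rw [hd, max_eq_left hl, Real.inv_rpow (by norm_num), Real.rpow_neg (by norm_num)]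
          rw [hdeq, ← Real.mul_rpow (by norm_num) hμR.le]
          exact Real.rpow_le_rpow (by positivity) (by linarith) hl
        · have hdeq : d = 1 := by
            rw [hd, max_eq_right hl.le, neg_zero, Real.rpow_zero]
          rw [hdeq, one_mul]
          exact Real.rpow_le_rpow_of_nonpos hνpos hνμR hl.le
      exact mul_le_mul (hanti hνμ) hdμ (by positivity) (ha ν)
    have hS0 : ∀ ν : ℕ, 0 ≤ a ν * (ν:ℝ) ^ lam := fun ν =>
      mul_nonneg (ha ν) (Real.rpow_nonneg (Nat.cast_nonneg ν) _)
    have hsub : ∑ ν ∈ Icc k μ, a ν * (ν:ℝ) ^ lam ≤ ∑ ν ∈ Icc n μ, a ν * (ν:ℝ) ^ lam :=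
      sum_le_sum_of_subset_of_nonneg (Icc_subset_Icc hkn le_rfl) (fun i _ _ => hS0 i)
    have hconst : ((μ + 1 - k : ℕ) : ℝ) * (a μ * (d * (μ:ℝ) ^ lam))
        ≤ ∑ ν ∈ Icc k μ, a ν * (ν:ℝ) ^ lam := by
      calc ((μ + 1 - k : ℕ) : ℝ) * (a μ * (d * (μ:ℝ) ^ lam))
          = ∑ _ν ∈ Icc k μ, a μ * (d * (μ:ℝ) ^ lam) := by
            rw [sum_const, Nat.card_Icc, nsmul_eq_mul]
        _ ≤ ∑ ν ∈ Icc k μ, a ν * (ν:ℝ) ^ lam := sum_le_sum hterm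
    have hcard : (μ:ℝ) / 2 ≤ ((μ + 1 - k : ℕ) : ℝ) := by
      have : μ ≤ 2 * (μ + 1 - k) := by omega
      have := (by exact_mod_cast this : (μ:ℝ) ≤ 2 * ((μ + 1 - k : ℕ) : ℝ))
      linarith
    have hSlow : c * (a μ * (μ:ℝ) ^ (lam+1)) ≤ ∑ ν ∈ Icc n μ, a ν * (ν:ℝ) ^ lam := by
      have h1 : c * (a μ * (μ:ℝ) ^ (lam+1)) = (μ:ℝ)/2 * (a μ * (d * (μ:ℝ) ^ lam)) := by
        rw [Real.rpow_add_one hμR.ne' lam, hc]; ring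
      rw [h1]
      calc (μ:ℝ)/2 * (a μ * (d * (μ:ℝ) ^ lam))
          ≤ ((μ + 1 - k : ℕ) : ℝ) * (a μ * (d * (μ:ℝ) ^ lam)) :=
            mul_le_mul_of_nonneg_right hcard (mul_nonneg (ha μ) (by positivity))
        _ ≤ _ := le_trans hconst hsub
    have hX0 : 0 ≤ a μ * (μ:ℝ) ^ (lam+1) :=
      mul_nonneg (ha μ) (Real.rpow_nonneg hμR.le _)
    have hpow : c ^ p * (a μ * (μ:ℝ) ^ (lam+1)) ^ p
        ≤ (∑ ν ∈ Icc n μ, a ν * (ν:ℝ) ^ lam) ^ p := by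
      rw [← Real.mul_rpow hcpos.le hX0]
      exact Real.rpow_le_rpow (by positivity) hSlow hp0
    have hμα : (0:ℝ) ≤ (μ:ℝ) ^ (-α-1) := Real.rpow_nonneg hμR.le _
    calc c ^ p * ((μ:ℝ) ^ (-α-1) * (a μ * (μ:ℝ) ^ (lam+1)) ^ p)
        = (μ:ℝ) ^ (-α-1) * (c ^ p * (a μ * (μ:ℝ) ^ (lam+1)) ^ p) := by ring
      _ ≤ (μ:ℝ) ^ (-α-1) * (∑ ν ∈ Icc n μ, a ν * (ν:ℝ) ^ lam) ^ p :=
          mul_le_mul_of_nonneg_left hpow hμα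
  have hU0 : ∀ μ : ℕ, 0 ≤ (μ:ℝ) ^ (-α-1) * (∑ ν ∈ Icc n μ, a ν * (ν:ℝ) ^ lam) ^ p := by
    intro μ
    have : (0:ℝ) ≤ ∑ ν ∈ Icc n μ, a ν * (ν:ℝ) ^ lam :=
      sum_nonneg fun ν _ => mul_nonneg (ha ν) (Real.rpow_nonneg (Nat.cast_nonneg ν) _)
    exact mul_nonneg (Real.rpow_nonneg (Nat.cast_nonneg μ) _) (Real.rpow_nonneg this _)
  calc c ^ p * ∑ μ ∈ Icc (4*n) m, (μ:ℝ) ^ (-α-1) * (a μ * (μ:ℝ) ^ (lam+1)) ^ p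
      = ∑ μ ∈ Icc (4*n) m, c ^ p * ((μ:ℝ) ^ (-α-1) * (a μ * (μ:ℝ) ^ (lam+1)) ^ p) :=
        mul_sum _ _ _
    _ ≤ ∑ μ ∈ Icc (4*n) m, (μ:ℝ) ^ (-α-1) * (∑ ν ∈ Icc n μ, a ν * (ν:ℝ) ^ lam) ^ p :=
        sum_le_sum key
    _ ≤ ∑ μ ∈ Icc n m, (μ:ℝ) ^ (-α-1) * (∑ ν ∈ Icc n μ, a ν * (ν:ℝ) ^ lam) ^ p :=
        sum_le_sum_of_subset_of_nonneg (Icc_subset_Icc (by omega) le_rfl)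
          (fun i _ _ => hU0 i)
end

section
/- Let {a_ν} be a non-negative decreasing sequence, α > 0, λ ∈ ℝ, and 0 < p ≤ 1. Then there exists C > 0 depending only on α, λ, p such that for all positive integers n, m with m ≥ 4n, ∑_{μ=4n}^{m} μ^{α-1} (∑_{ν=μ}^{m} a_ν ν^λ)^p ≤ C ∑_{μ=n}^{m} μ^{α-1} (a_μ μ^{λ+1})^p. -/
/-!
Cut `[μ, m]` into dyadic blocks `[N, 2N)` with `N = 2^k μ`. As `a` decreases, the block sum is at
most `2^|λ| a_N N^(λ+1)`, and `a_N N^(λ+1)` is dominated, up to a constant, by every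
`a_j j^(λ+1)` with `N/2 < j ≤ N`, hence by their average. Subadditivity of `t ↦ t^p` for `p ≤ 1`
then gives `(∑_{ν=μ}^m a_ν ν^λ)^p ≲ ∑_{μ/2 < j ≤ m} j⁻¹ (a_j j^(λ+1))^p`. Exchanging the order of
summation leaves the weights `j⁻¹ ∑_{μ < 2j} μ^(α-1)`, which are `O(j^(α-1))` since `α > 0`.
-/

open Finset

lemma rpow_le_two_rpow_abs_mul_rpow (t : ℝ) {x y : ℝ} (hx : 0 < x) (hxy : x ≤ y)
    (hy : y ≤ 2 * x) : y ^ t ≤ 2 ^ |t| * x ^ t := by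
  rcases le_or_gt 0 t with ht | ht
  · calc y ^ t ≤ (2 * x) ^ t := by gcongr; linarith
      _ = 2 ^ |t| * x ^ t := by rw [abs_of_nonneg ht, Real.mul_rpow zero_le_two hx.le]
  · calc y ^ t ≤ x ^ t := Real.rpow_le_rpow_of_nonpos hx hxy ht.le
      _ ≤ 2 ^ |t| * x ^ t :=
        le_mul_of_one_le_left (by positivity) (Real.one_le_rpow one_le_two (abs_nonneg t))

lemma le_two_mul_sum_Ioc_half_inv_mul {w : ℕ → ℝ} {x : ℝ} {N : ℕ} (hN : 1 ≤ N) (hx : 0 ≤ x)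
    (hw : ∀ j ∈ Ioc (N / 2) N, x ≤ w j) : x ≤ 2 * ∑ j ∈ Ioc (N / 2) N, (j : ℝ)⁻¹ * w j := by
  have hN0 : (0 : ℝ) < N := by exact_mod_cast hN
  have hcard : (N : ℝ) ≤ 2 * #(Ioc (N / 2) N) := by
    rw [Nat.card_Ioc]
    exact_mod_cast (by omega : N ≤ 2 * (N - N / 2))
  have hterm : ∀ j ∈ Ioc (N / 2) N, x / N ≤ (j : ℝ)⁻¹ * w j := by
    intro j hj
    have hj' := mem_Ioc.mp hj
    have hj0 : (0 : ℝ) < j := by exact_mod_cast (by omega : 0 < j)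
    have hjN : (j : ℝ) ≤ N := by exact_mod_cast hj'.2
    rw [div_eq_inv_mul]
    exact mul_le_mul (inv_anti₀ hj0 hjN) (hw j hj) hx (inv_nonneg.mpr hj0.le)
  calc x = N * (x / N) := by field_simp
    _ ≤ 2 * #(Ioc (N / 2) N) * (x / N) := by gcongr
    _ = 2 * (#(Ioc (N / 2) N) • (x / N)) := by rw [nsmul_eq_mul]; ring
    _ ≤ 2 * ∑ j ∈ Ioc (N / 2) N, (j : ℝ)⁻¹ * w j := by
        gcongr
        exact card_nsmul_le_sum _ _ _ hterm

lemma sum_Ico_two_mul_le {a : ℕ → ℝ} (ha : Antitone a) (ha0 : ∀ ν, 0 ≤ a ν) (lam : ℝ) {μ : ℕ}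
    (hμ : 1 ≤ μ) :
    ∑ ν ∈ Ico μ (2 * μ), a ν * (ν : ℝ) ^ lam ≤ 2 ^ |lam| * (a μ * (μ : ℝ) ^ (lam + 1)) := by
  have hμ0 : (0 : ℝ) < μ := by exact_mod_cast hμ
  calc ∑ ν ∈ Ico μ (2 * μ), a ν * (ν : ℝ) ^ lam
      ≤ #(Ico μ (2 * μ)) • (a μ * (2 ^ |lam| * (μ : ℝ) ^ lam)) := by
        refine sum_le_card_nsmul _ _ _ fun ν hν => ?_
        rw [mem_Ico] at hν
        have hμν : (μ : ℝ) ≤ ν := by exact_mod_cast hν.1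
        have hνμ : (ν : ℝ) ≤ 2 * μ := by exact_mod_cast (by omega : ν ≤ 2 * μ)
        exact mul_le_mul (ha hν.1) (rpow_le_two_rpow_abs_mul_rpow lam hμ0 hμν hνμ)
          (by positivity) (ha0 μ)
    _ = 2 ^ |lam| * (a μ * (μ : ℝ) ^ (lam + 1)) := by
        rw [Nat.card_Ico, show 2 * μ - μ = μ by omega, nsmul_eq_mul, Real.rpow_add_one hμ0.ne']
        ring

lemma rpow_sum_Ico_two_mul_le {a : ℕ → ℝ} (ha : Antitone a) (ha0 : ∀ ν, 0 ≤ a ν) (lam : ℝ)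
    {p : ℝ} (hp : 0 ≤ p) {μ : ℕ} (hμ : 1 ≤ μ) :
    (∑ ν ∈ Ico μ (2 * μ), a ν * (ν : ℝ) ^ lam) ^ p ≤
      2 * (2 ^ |lam| * 2 ^ |lam + 1|) ^ p *
        ∑ j ∈ Ioc (μ / 2) μ, (j : ℝ)⁻¹ * (a j * (j : ℝ) ^ (lam + 1)) ^ p := by
  set c : ℝ := 2 ^ |lam| * 2 ^ |lam + 1|
  have hcomp : ∀ j ∈ Ioc (μ / 2) μ, (∑ ν ∈ Ico μ (2 * μ), a ν * (ν : ℝ) ^ lam) ^ p ≤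
      c ^ p * (a j * (j : ℝ) ^ (lam + 1)) ^ p := by
    intro j hj
    rw [mem_Ioc] at hj
    have hj0 : (0 : ℝ) < j := by exact_mod_cast (by omega : 0 < j)
    have hjμ : (j : ℝ) ≤ μ := by exact_mod_cast hj.2
    have hμj : (μ : ℝ) ≤ 2 * j := by exact_mod_cast (by omega : μ ≤ 2 * j)
    have haj := ha0 j
    rw [← Real.mul_rpow (by positivity) (by positivity)]
    gcongr
    · exact sum_nonneg fun ν _ => mul_nonneg (ha0 ν) (by positivity)
    calc ∑ ν ∈ Ico μ (2 * μ), a ν * (ν : ℝ) ^ lam ≤ 2 ^ |lam| * (a μ * (μ : ℝ) ^ (lam + 1)) :=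
          sum_Ico_two_mul_le ha ha0 lam hμ
      _ ≤ 2 ^ |lam| * (a j * (2 ^ |lam + 1| * (j : ℝ) ^ (lam + 1))) := by
          gcongr
          · exact ha hj.2
          · exact rpow_le_two_rpow_abs_mul_rpow _ hj0 hjμ hμj
      _ = c * (a j * (j : ℝ) ^ (lam + 1)) := by ring
  calc (∑ ν ∈ Ico μ (2 * μ), a ν * (ν : ℝ) ^ lam) ^ p
      ≤ 2 * ∑ j ∈ Ioc (μ / 2) μ, (j : ℝ)⁻¹ * (c ^ p * (a j * (j : ℝ) ^ (lam + 1)) ^ p) :=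
        le_two_mul_sum_Ioc_half_inv_mul hμ
          (Real.rpow_nonneg (sum_nonneg fun ν _ => mul_nonneg (ha0 ν) (by positivity)) p) hcomp
    _ = 2 * c ^ p * ∑ j ∈ Ioc (μ / 2) μ, (j : ℝ)⁻¹ * (a j * (j : ℝ) ^ (lam + 1)) ^ p := by
        rw [mul_assoc, mul_sum _ _ (c ^ p)]
        congr 1
        exact sum_congr rfl fun j _ => by ring

lemma rpow_sum_Icc_le {a : ℕ → ℝ} (ha : Antitone a) (ha0 : ∀ ν, 0 ≤ a ν) (lam : ℝ)
    {p : ℝ} (hp0 : 0 < p) (hp1 : p ≤ 1) (m : ℕ) {μ : ℕ} (hμ : 1 ≤ μ) :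
    (∑ ν ∈ Icc μ m, a ν * (ν : ℝ) ^ lam) ^ p ≤
      2 * (2 ^ |lam| * 2 ^ |lam + 1|) ^ p *
        ∑ j ∈ Ioc (μ / 2) m, (j : ℝ)⁻¹ * (a j * (j : ℝ) ^ (lam + 1)) ^ p := by
  have hterm : ∀ ν, 0 ≤ a ν * (ν : ℝ) ^ lam := fun ν => mul_nonneg (ha0 ν) (by positivity)
  rcases lt_or_ge m μ with hmμ | hμm
  · rw [Icc_eq_empty (by omega), sum_empty, Real.zero_rpow hp0.ne']
    exact mul_nonneg (by positivity) (sum_nonneg fun j _ => by have := ha0 j; positivity)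
  have hsplit : ∑ ν ∈ Icc μ m, a ν * (ν : ℝ) ^ lam =
      ∑ ν ∈ Icc μ m with ν < 2 * μ, a ν * (ν : ℝ) ^ lam +
        ∑ ν ∈ Icc (2 * μ) m, a ν * (ν : ℝ) ^ lam := by
    rw [← sum_filter_add_sum_filter_not (Icc μ m) (· < 2 * μ)]
    congr 2
    ext ν
    simp only [mem_filter, mem_Icc]
    omega
  have hhead : ∑ ν ∈ Icc μ m with ν < 2 * μ, a ν * (ν : ℝ) ^ lam ≤
      ∑ ν ∈ Ico μ (2 * μ), a ν * (ν : ℝ) ^ lam :=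
    sum_le_sum_of_subset_of_nonneg
      (fun ν hν => by simp only [mem_filter, mem_Icc, mem_Ico] at hν ⊢; omega)
      (fun ν _ _ => hterm ν)
  have htail := rpow_sum_Icc_le ha ha0 lam hp0 hp1 m (μ := 2 * μ) (by omega)
  rw [Nat.mul_div_cancel_left μ two_pos] at htail
  calc (∑ ν ∈ Icc μ m, a ν * (ν : ℝ) ^ lam) ^ p
      ≤ (∑ ν ∈ Ico μ (2 * μ), a ν * (ν : ℝ) ^ lam +
          ∑ ν ∈ Icc (2 * μ) m, a ν * (ν : ℝ) ^ lam) ^ p := by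
        rw [hsplit]
        gcongr
        exact add_nonneg (sum_nonneg fun ν _ => hterm ν) (sum_nonneg fun ν _ => hterm ν)
    _ ≤ (∑ ν ∈ Ico μ (2 * μ), a ν * (ν : ℝ) ^ lam) ^ p +
          (∑ ν ∈ Icc (2 * μ) m, a ν * (ν : ℝ) ^ lam) ^ p :=
        Real.rpow_add_le_add_rpow (sum_nonneg fun ν _ => hterm ν) (sum_nonneg fun ν _ => hterm ν)
          hp0.le hp1
    _ ≤ _ := add_le_add (rpow_sum_Ico_two_mul_le ha ha0 lam hp0.le hμ) htail
    _ = _ := by rw [← mul_add, sum_Ioc_consecutive _ (Nat.div_le_self μ 2) hμm]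
termination_by m + 1 - μ

lemma mul_rpow_sub_one_le_rpow_sub_rpow {α : ℝ} (hα0 : 0 ≤ α) (hα1 : α ≤ 1) {x : ℝ}
    (hx : 1 ≤ x) : α * x ^ (α - 1) ≤ x ^ α - (x - 1) ^ α := by
  have hx0 : 0 < x := by linarith
  have hinv : x⁻¹ ≤ 1 := inv_le_one_of_one_le₀ hx
  have hbernoulli := rpow_one_add_le_one_add_mul_self (s := -x⁻¹) (by linarith) hα0 hα1
  have hfactor : (x - 1) ^ α = x ^ α * (1 + -x⁻¹) ^ α := by
    rw [← Real.mul_rpow hx0.le (by linarith)]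
    congr 1
    field_simp
    ring
  rw [hfactor, Real.rpow_sub_one hx0.ne']
  calc α * (x ^ α / x) = x ^ α - x ^ α * (1 + α * -x⁻¹) := by ring
    _ ≤ x ^ α - x ^ α * (1 + -x⁻¹) ^ α := by gcongr

lemma sum_Icc_one_rpow_sub_one_le {α : ℝ} (hα : 0 < α) (M : ℕ) :
    ∑ μ ∈ Icc 1 M, (μ : ℝ) ^ (α - 1) ≤ max 1 α⁻¹ * (M : ℝ) ^ α := by
  rcases le_or_gt 1 α with hα1 | hα1
  · calc ∑ μ ∈ Icc 1 M, (μ : ℝ) ^ (α - 1) ≤ #(Icc 1 M) • (M : ℝ) ^ (α - 1) :=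
          sum_le_card_nsmul _ _ _ fun μ hμ =>
            Real.rpow_le_rpow (Nat.cast_nonneg μ) (by exact_mod_cast (mem_Icc.mp hμ).2)
              (sub_nonneg.mpr hα1)
      _ = (M : ℝ) ^ α := by
          rw [Nat.card_Icc, Nat.add_sub_cancel, nsmul_eq_mul]
          conv_rhs => rw [← add_sub_cancel 1 α, Real.rpow_add' (Nat.cast_nonneg M) (by simp; linarith)]
          rw [Real.rpow_one]
      _ ≤ max 1 α⁻¹ * (M : ℝ) ^ α := le_mul_of_one_le_left (by positivity) (le_max_left _ _)
  · have htelescope : ∀ M : ℕ, α * ∑ μ ∈ Icc 1 M, (μ : ℝ) ^ (α - 1) ≤ (M : ℝ) ^ α := by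
      intro M
      induction M with
      | zero => simp [Real.zero_rpow hα.ne']
      | succ M ih =>
        have hstep := mul_rpow_sub_one_le_rpow_sub_rpow hα.le hα1.le (x := M + 1) (by simp)
        rw [sum_Icc_succ_top (by omega), mul_add]
        push_cast
        rw [add_sub_cancel_right] at hstep
        linarith
    calc ∑ μ ∈ Icc 1 M, (μ : ℝ) ^ (α - 1) = α⁻¹ * (α * ∑ μ ∈ Icc 1 M, (μ : ℝ) ^ (α - 1)) := by
          field_simp
      _ ≤ α⁻¹ * (M : ℝ) ^ α := by gcongr; exact htelescope M
      _ ≤ max 1 α⁻¹ * (M : ℝ) ^ α := by gcongr; exact le_max_right _ _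

lemma sum_rpow_mul_sum_Ioc_half_le {α : ℝ} (hα : 0 < α) {w : ℕ → ℝ} (hw : ∀ j, 0 ≤ w j)
    {L : ℕ} (hL : 1 ≤ L) (m : ℕ) :
    ∑ μ ∈ Icc L m, (μ : ℝ) ^ (α - 1) * ∑ j ∈ Ioc (μ / 2) m, (j : ℝ)⁻¹ * w j ≤
      2 ^ α * max 1 α⁻¹ * ∑ j ∈ Ioc (L / 2) m, (j : ℝ) ^ (α - 1) * w j := by
  have hswap : ∑ μ ∈ Icc L m, (μ : ℝ) ^ (α - 1) * ∑ j ∈ Ioc (μ / 2) m, (j : ℝ)⁻¹ * w j =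
      ∑ j ∈ Ioc (L / 2) m,
        (∑ μ ∈ Icc L m with μ / 2 < j, (μ : ℝ) ^ (α - 1)) * ((j : ℝ)⁻¹ * w j) := by
    simp only [mul_sum, sum_mul]
    exact sum_comm' fun μ j => by simp only [mem_Icc, mem_Ioc, mem_filter]; omega
  rw [hswap, mul_sum]
  refine sum_le_sum fun j hj => ?_
  have hj0 : (0 : ℝ) < j := by exact_mod_cast (by simp only [mem_Ioc] at hj; omega : 0 < j)
  have hwj := hw j
  calc (∑ μ ∈ Icc L m with μ / 2 < j, (μ : ℝ) ^ (α - 1)) * ((j : ℝ)⁻¹ * w j)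
      ≤ (∑ μ ∈ Icc 1 (2 * j), (μ : ℝ) ^ (α - 1)) * ((j : ℝ)⁻¹ * w j) := by
        gcongr ?_ * _
        exact sum_le_sum_of_subset_of_nonneg
          (fun μ hμ => by simp only [mem_filter, mem_Icc] at hμ ⊢; omega)
          (fun μ _ _ => by positivity)
    _ ≤ (max 1 α⁻¹ * ((2 * j : ℕ) : ℝ) ^ α) * ((j : ℝ)⁻¹ * w j) := by
        gcongr
        exact sum_Icc_one_rpow_sub_one_le hα _
    _ = 2 ^ α * max 1 α⁻¹ * ((j : ℝ) ^ (α - 1) * w j) := by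
        rw [Nat.cast_mul, Nat.cast_two, Real.mul_rpow zero_le_two hj0.le,
          Real.rpow_sub_one hj0.ne']
        field_simp

theorem stmt_10 (α lam p : ℝ) (hα : 0 < α) (hp0 : 0 < p) (hp1 : p ≤ 1) :
    ∃ C : ℝ, 0 < C ∧ ∀ a : ℕ → ℝ, (∀ ν, 0 ≤ a ν) → (∀ ν, a (ν + 1) ≤ a ν) →
      ∀ n m : ℕ, 1 ≤ n → 4 * n ≤ m →
        ∑ μ ∈ Icc (4 * n) m, (μ : ℝ) ^ (α - 1) * (∑ ν ∈ Icc μ m, a ν * (ν : ℝ) ^ lam) ^ p ≤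
          C * ∑ μ ∈ Icc n m, (μ : ℝ) ^ (α - 1) * (a μ * (μ : ℝ) ^ (lam + 1)) ^ p := by
  set C₁ : ℝ := 2 * (2 ^ |lam| * 2 ^ |lam + 1|) ^ p
  refine ⟨C₁ * (2 ^ α * max 1 α⁻¹), by positivity, fun a ha0 hdec n m hn _ => ?_⟩
  have hw : ∀ j, 0 ≤ (a j * (j : ℝ) ^ (lam + 1)) ^ p := fun j => by have := ha0 j; positivity
  calc ∑ μ ∈ Icc (4 * n) m, (μ : ℝ) ^ (α - 1) * (∑ ν ∈ Icc μ m, a ν * (ν : ℝ) ^ lam) ^ p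
      ≤ ∑ μ ∈ Icc (4 * n) m, (μ : ℝ) ^ (α - 1) *
          (C₁ * ∑ j ∈ Ioc (μ / 2) m, (j : ℝ)⁻¹ * (a j * (j : ℝ) ^ (lam + 1)) ^ p) := by
        gcongr with μ hμ
        exact rpow_sum_Icc_le (antitone_nat_of_succ_le hdec) ha0 lam hp0 hp1 m
          (by simp only [mem_Icc] at hμ; omega)
    _ = C₁ * ∑ μ ∈ Icc (4 * n) m, (μ : ℝ) ^ (α - 1) *
          ∑ j ∈ Ioc (μ / 2) m, (j : ℝ)⁻¹ * (a j * (j : ℝ) ^ (lam + 1)) ^ p := by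
        rw [mul_sum]
        exact sum_congr rfl fun μ _ => by ring
    _ ≤ C₁ * (2 ^ α * max 1 α⁻¹ *
          ∑ j ∈ Ioc (4 * n / 2) m, (j : ℝ) ^ (α - 1) * (a j * (j : ℝ) ^ (lam + 1)) ^ p) := by
        gcongr
        exact sum_rpow_mul_sum_Ioc_half_le hα hw (by omega) m
    _ ≤ C₁ * (2 ^ α * max 1 α⁻¹ *
          ∑ j ∈ Icc n m, (j : ℝ) ^ (α - 1) * (a j * (j : ℝ) ^ (lam + 1)) ^ p) := by
        gcongr _ * (_ * ?_)
        exact sum_le_sum_of_subset_of_nonneg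
          (fun j hj => by simp only [mem_Ioc, mem_Icc] at hj ⊢; omega)
          (fun j _ _ => mul_nonneg (by positivity) (hw j))
    _ = _ := by ring
end

section
/- Let {a_ν} be a non-negative decreasing sequence, α > 0, λ ∈ ℝ, and 0 < p ≤ 1. Then there exists C > 0 depending only on α, λ, p such that for all positive integers n, m with m ≥ 4n, ∑_{μ=4n}^{m} μ^{-α-1} (∑_{ν=4n}^{μ} a_ν ν^λ)^p ≤ C ∑_{μ=n}^{m} μ^{-α-1} (a_μ μ^{λ+1})^p. -/
/-!
Swapping the order of summation and using `∑_{μ ≥ j} μ^(-α-1) ≤ (1 + 1/α) j^(-α)`, the theorem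
reduces to the pointwise Hardy-type bound
`(∑_{ν=4n}^{μ} a_ν ν^λ)^p ≤ C ∑_{j=n}^{μ} (a_j j^(λ+1))^p / j`.
Write `S_ν` for the partial sums on the left. Since `t ↦ t^p` is concave, appending the term
`x = a_{ν+1} (ν+1)^λ` raises `S_ν^p` by at most `S_ν^(p-1) x`; for `ν ≥ 8n` monotonicity of `a`
gives `S_ν ≳ a_{ν+1} (ν+1)^(λ+1)`, so the increment is `≲ (a_{ν+1} (ν+1)^(λ+1))^p / (ν+1)`.
The initial block `S_{8n}` is `≲ a_{4n} n^(λ+1)`, which is dominated by the terms `j ∈ [n, 4n)`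
of the right-hand side because `a` is decreasing.
-/

open Finset Real

lemma rpow_le_rpow_abs_mul_rpow {x y c : ℝ} (hx : 0 < x) (hy : 0 < y) (hxy : x ≤ c * y)
    (hyx : y ≤ c * x) (γ : ℝ) : x ^ γ ≤ c ^ |γ| * y ^ γ := by
  have hc : 0 < c := pos_of_mul_pos_left (hy.trans_le hyx) hx.le
  have hratio : (x / y) ^ γ ≤ c ^ |γ| := by
    rcases le_total 0 γ with hγ | hγ
    · rw [abs_of_nonneg hγ]
      exact rpow_le_rpow (by positivity) ((div_le_iff₀ hy).2 hxy) hγ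
    · rw [abs_of_nonpos hγ, ← inv_div, inv_rpow (by positivity), ← rpow_neg (by positivity)]
      exact rpow_le_rpow (by positivity) ((div_le_iff₀ hx).2 hyx) (by linarith)
  calc x ^ γ = (x / y) ^ γ * y ^ γ := by
        rw [div_rpow hx.le hy.le, div_mul_cancel₀ _ (by positivity)]
    _ ≤ c ^ |γ| * y ^ γ := by gcongr

lemma add_rpow_le_rpow_add_mul {p s x y : ℝ} (hp1 : p ≤ 1) (hy : 0 < y) (hys : y ≤ s)
    (hx : 0 ≤ x) : (s + x) ^ p ≤ s ^ p + y ^ (p - 1) * x := by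
  have hs : 0 < s := hy.trans_le hys
  calc (s + x) ^ p = (s + x) ^ (p - 1) * (s + x) := by
        rw [rpow_sub_one (by positivity), div_mul_cancel₀ _ (by positivity)]
    _ ≤ s ^ (p - 1) * (s + x) :=
        mul_le_mul_of_nonneg_right (rpow_le_rpow_of_nonpos hs (by linarith) (by linarith))
          (by positivity)
    _ = s ^ p + s ^ (p - 1) * x := by
        rw [mul_add, rpow_sub_one hs.ne', div_mul_cancel₀ _ hs.ne']
    _ ≤ s ^ p + y ^ (p - 1) * x := by
        have := rpow_le_rpow_of_nonpos hy hys (by linarith : p - 1 ≤ 0)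
        gcongr

lemma le_add_sum_Ioc_of_succ_le {M : Type*} [AddCommMonoid M] [PartialOrder M]
    [IsOrderedAddMonoid M] {u f : ℕ → M} {N : ℕ}
    (h : ∀ ν, N ≤ ν → u (ν + 1) ≤ u ν + f (ν + 1)) {μ : ℕ} (hμ : N ≤ μ) :
    u μ ≤ u N + ∑ i ∈ Ioc N μ, f i := by
  induction μ, hμ using Nat.le_induction with
  | base => simp
  | succ ν hν ih =>
    rw [sum_Ioc_succ_top hν, ← add_assoc]
    exact (h ν hν).trans (add_le_add_left ih _)

lemma sum_Ioc_rpow_neg_sub_one_le {α : ℝ} (hα : 0 < α) {j : ℕ} (hj : 1 ≤ j) (m : ℕ) :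
    ∑ μ ∈ Ioc j m, (μ : ℝ) ^ (-α - 1) ≤ (j : ℝ) ^ (-α) / α := by
  obtain hmj | hjm := lt_or_ge m j
  · rw [Ioc_eq_empty (by omega), sum_empty]; positivity
  have hj0 : (0 : ℝ) < j := by exact_mod_cast hj
  have hanti : AntitoneOn (fun x : ℝ ↦ x ^ (-α - 1)) (Set.Icc (j : ℝ) m) :=
    (antitoneOn_rpow_Ioi_of_exponent_nonpos (by linarith)).mono
      fun x hx ↦ hj0.trans_le hx.1
  have hint : ∫ x in (j : ℝ)..m, x ^ (-α - 1) = ((j : ℝ) ^ (-α) - (m : ℝ) ^ (-α)) / α := by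
    rw [integral_rpow (Or.inr ⟨by linarith, fun h ↦ ?_⟩)]
    · rw [show -α - 1 + 1 = -α by ring, div_neg, ← neg_div, neg_sub]
    · rw [Set.mem_uIcc] at h
      have : (j : ℝ) ≤ m := by exact_mod_cast hjm
      rcases h with h | h <;> linarith
  calc ∑ μ ∈ Ioc j m, (μ : ℝ) ^ (-α - 1)
      = ∑ i ∈ Ico j m, ((i + 1 : ℕ) : ℝ) ^ (-α - 1) := by
        rw [sum_Ico_add' (fun i : ℕ ↦ (i : ℝ) ^ (-α - 1))]; congr 1; ext; simp
    _ ≤ ((j : ℝ) ^ (-α) - (m : ℝ) ^ (-α)) / α := hint ▸ hanti.sum_le_integral_Ico hjm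
    _ ≤ (j : ℝ) ^ (-α) / α := by gcongr; linarith [rpow_nonneg (Nat.cast_nonneg m) (-α)]

lemma sum_Icc_rpow_neg_sub_one_le {α : ℝ} (hα : 0 < α) {j : ℕ} (hj : 1 ≤ j) (m : ℕ) :
    ∑ μ ∈ Icc j m, (μ : ℝ) ^ (-α - 1) ≤ (1 + 1 / α) * (j : ℝ) ^ (-α) := by
  have hj1 : (1 : ℝ) ≤ j := by exact_mod_cast hj
  calc ∑ μ ∈ Icc j m, (μ : ℝ) ^ (-α - 1)
      ≤ ∑ μ ∈ insert j (Ioc j m), (μ : ℝ) ^ (-α - 1) :=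
        sum_le_sum_of_subset_of_nonneg (fun μ ↦ by simp only [mem_Icc, mem_insert, mem_Ioc]; omega)
          fun μ _ _ ↦ rpow_nonneg (Nat.cast_nonneg μ) _
    _ = (j : ℝ) ^ (-α - 1) + ∑ μ ∈ Ioc j m, (μ : ℝ) ^ (-α - 1) := sum_insert (by simp)
    _ ≤ (j : ℝ) ^ (-α) + (j : ℝ) ^ (-α) / α :=
        add_le_add (rpow_le_rpow_of_exponent_le hj1 (by linarith))
          (sum_Ioc_rpow_neg_sub_one_le hα hj m)
    _ = (1 + 1 / α) * (j : ℝ) ^ (-α) := by ring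

lemma sum_Icc_mul_sum_Icc_le {α : ℝ} (hα : 0 < α) {r : ℕ → ℝ} (hr : ∀ j, 0 ≤ r j) {n : ℕ}
    (hn : 1 ≤ n) (m : ℕ) :
    ∑ μ ∈ Icc n m, (μ : ℝ) ^ (-α - 1) * ∑ j ∈ Icc n μ, r j ≤
      (1 + 1 / α) * ∑ j ∈ Icc n m, (j : ℝ) ^ (-α) * r j := by
  calc ∑ μ ∈ Icc n m, (μ : ℝ) ^ (-α - 1) * ∑ j ∈ Icc n μ, r j
      = ∑ j ∈ Icc n m, r j * ∑ μ ∈ Icc j m, (μ : ℝ) ^ (-α - 1) := by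
        simp_rw [mul_sum]
        rw [sum_comm' (t' := Icc n m) (s' := fun j ↦ Icc j m)
          (fun μ j ↦ by simp only [mem_Icc]; omega)]
        simp_rw [mul_comm]
    _ ≤ ∑ j ∈ Icc n m, r j * ((1 + 1 / α) * (j : ℝ) ^ (-α)) := by
        gcongr with j hj
        · exact hr j
        · exact sum_Icc_rpow_neg_sub_one_le hα (hn.trans (mem_Icc.1 hj).1) m
    _ = (1 + 1 / α) * ∑ j ∈ Icc n m, (j : ℝ) ^ (-α) * r j := by
        rw [mul_sum]; congr 1; ext j; ring

lemma rpow_add_one_le_sum_Icc_rpow (lam : ℝ) {A ν : ℕ} (hA : 1 ≤ A) (hν : 2 * A ≤ ν) :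
    ((ν + 1 : ℕ) : ℝ) ^ (lam + 1) ≤ 2 * 4 ^ |lam| * ∑ j ∈ Icc A ν, (j : ℝ) ^ lam := by
  set N : ℝ := ((ν + 1 : ℕ) : ℝ)
  have hN : 0 < N := by positivity
  have hterm : ∀ j ∈ Icc (ν / 2) ν, N ^ lam ≤ 4 ^ |lam| * (j : ℝ) ^ lam := by
    intro j hj
    rw [mem_Icc] at hj
    apply rpow_le_rpow_abs_mul_rpow hN (by exact_mod_cast (by omega : 0 < j))
    · simp only [N]; exact_mod_cast (by omega : ν + 1 ≤ 4 * j)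
    · simp only [N]; exact_mod_cast (by omega : j ≤ 4 * (ν + 1))
  have hcard : N ≤ 2 * (Icc (ν / 2) ν).card := by
    rw [Nat.card_Icc]; simp only [N]; exact_mod_cast (by omega : ν + 1 ≤ 2 * (ν + 1 - ν / 2))
  calc N ^ (lam + 1) = N * N ^ lam := by rw [rpow_add_one hN.ne', mul_comm]
    _ ≤ 2 * (Icc (ν / 2) ν).card * N ^ lam := by gcongr
    _ = 2 * ∑ j ∈ Icc (ν / 2) ν, N ^ lam := by rw [sum_const, nsmul_eq_mul, mul_assoc]
    _ ≤ 2 * ∑ j ∈ Icc (ν / 2) ν, 4 ^ |lam| * (j : ℝ) ^ lam := by gcongr with j hj; exact hterm j hj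
    _ ≤ 2 * ∑ j ∈ Icc A ν, 4 ^ |lam| * (j : ℝ) ^ lam := by
        gcongr
        omega
    _ = 2 * 4 ^ |lam| * ∑ j ∈ Icc A ν, (j : ℝ) ^ lam := by rw [← mul_sum, mul_assoc]

lemma rpow_sum_Icc_succ_le {p : ℝ} (hp0 : 0 < p) (hp1 : p ≤ 1) (lam : ℝ) {a : ℕ → ℝ}
    (ha0 : ∀ ν, 0 ≤ a ν) (ha : Antitone a) {A ν : ℕ} (hA : 1 ≤ A) (hν : 2 * A ≤ ν) :
    (∑ k ∈ Icc A (ν + 1), a k * (k : ℝ) ^ lam) ^ p ≤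
      (∑ k ∈ Icc A ν, a k * (k : ℝ) ^ lam) ^ p + (2 * 4 ^ |lam|) ^ (1 - p) *
        ((a (ν + 1) * ((ν + 1 : ℕ) : ℝ) ^ (lam + 1)) ^ p / ((ν + 1 : ℕ) : ℝ)) := by
  set N : ℝ := ((ν + 1 : ℕ) : ℝ)
  set K : ℝ := 2 * 4 ^ |lam|
  set z : ℝ := a (ν + 1) * N ^ (lam + 1)
  rw [sum_Icc_succ_top (by omega)]
  rcases (ha0 (ν + 1)).eq_or_lt with h0 | hpos
  · simp [z, ← h0, zero_rpow hp0.ne']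
  have hN : 0 < N := by positivity
  have hK : 0 < K := by positivity
  have hz : 0 < z := by positivity
  have hzS : z / K ≤ ∑ k ∈ Icc A ν, a k * (k : ℝ) ^ lam := by
    calc z / K = a (ν + 1) * (N ^ (lam + 1) / K) := by ring
      _ ≤ a (ν + 1) * ∑ j ∈ Icc A ν, (j : ℝ) ^ lam := by
          gcongr
          rw [div_le_iff₀' hK]; exact rpow_add_one_le_sum_Icc_rpow lam hA hν
      _ ≤ ∑ k ∈ Icc A ν, a k * (k : ℝ) ^ lam := by
          rw [mul_sum]
          gcongr with k hk
          exact ha ((mem_Icc.1 hk).2.trans (Nat.le_succ ν))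
  have hx : a (ν + 1) * N ^ lam = z / N := by
    rw [eq_div_iff hN.ne', mul_assoc, ← rpow_add_one hN.ne']
  calc _ ≤ (∑ k ∈ Icc A ν, a k * (k : ℝ) ^ lam) ^ p + (z / K) ^ (p - 1) * (z / N) := by
        simp only [N] at hx
        rw [hx]
        exact add_rpow_le_rpow_add_mul hp1 (by positivity) hzS (by positivity)
    _ = _ := by
        rw [div_rpow hz.le hK.le, rpow_sub_one hz.ne', show 1 - p = -(p - 1) by ring,
          rpow_neg hK.le]
        field_simp

lemma exists_rpow_sum_Icc_le_sum_Ico {p : ℝ} (hp0 : 0 < p) (lam : ℝ) :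
    ∃ K, 0 < K ∧ ∀ a : ℕ → ℝ, (∀ ν, 0 ≤ a ν) → Antitone a → ∀ n : ℕ, 1 ≤ n →
      (∑ ν ∈ Icc (4 * n) (8 * n), a ν * (ν : ℝ) ^ lam) ^ p ≤
        K * ∑ j ∈ Ico n (4 * n), (a j * (j : ℝ) ^ (lam + 1)) ^ p / j := by
  set c : ℝ := (4 ^ |lam + 1|) ^ p
  have hc : 0 < c := by positivity
  refine ⟨(5 * 8 ^ |lam|) ^ p * (4 * c / 3), by positivity, fun a ha0 ha n hn ↦ ?_⟩
  have hn0 : (0 : ℝ) < n := by exact_mod_cast hn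
  set Q : ℝ := (a (4 * n) * (n : ℝ) ^ (lam + 1)) ^ p
  have hupper : ∑ ν ∈ Icc (4 * n) (8 * n), a ν * (ν : ℝ) ^ lam ≤
      5 * 8 ^ |lam| * (a (4 * n) * (n : ℝ) ^ (lam + 1)) := by
    calc ∑ ν ∈ Icc (4 * n) (8 * n), a ν * (ν : ℝ) ^ lam
        ≤ ∑ ν ∈ Icc (4 * n) (8 * n), a (4 * n) * (8 ^ |lam| * (n : ℝ) ^ lam) := by
          gcongr with ν hν
          · exact ha0 _
          · exact ha (mem_Icc.1 hν).1
          · rw [mem_Icc] at hν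
            apply rpow_le_rpow_abs_mul_rpow (by exact_mod_cast (by omega : 0 < ν)) hn0
            · exact_mod_cast (by omega : ν ≤ 8 * n)
            · exact_mod_cast (by omega : n ≤ 8 * ν)
      _ = (4 * n + 1 : ℕ) * (a (4 * n) * (8 ^ |lam| * (n : ℝ) ^ lam)) := by
          rw [sum_const, Nat.card_Icc, nsmul_eq_mul]; congr 2; omega
      _ ≤ 5 * n * (a (4 * n) * (8 ^ |lam| * (n : ℝ) ^ lam)) := by
          gcongr
          · exact mul_nonneg (ha0 _) (by positivity)
          · push_cast; linarith [(by exact_mod_cast hn : (1 : ℝ) ≤ n)]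
      _ = 5 * 8 ^ |lam| * (a (4 * n) * (n : ℝ) ^ (lam + 1)) := by
          rw [rpow_add_one hn0.ne']; ring
  have hlower : ∀ j ∈ Ico n (4 * n), Q / (c * (4 * n)) ≤ (a j * (j : ℝ) ^ (lam + 1)) ^ p / j := by
    intro j hj
    rw [mem_Ico] at hj
    have hj0 : (0 : ℝ) < j := by exact_mod_cast (by omega : 0 < j)
    have hjn : (j : ℝ) ≤ 4 * n := by exact_mod_cast (by omega : j ≤ 4 * n)
    have hcomp : (n : ℝ) ^ (lam + 1) ≤ 4 ^ |lam + 1| * (j : ℝ) ^ (lam + 1) :=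
      rpow_le_rpow_abs_mul_rpow hn0 hj0 (by exact_mod_cast (by omega : n ≤ 4 * j)) hjn _
    have hQ : Q ≤ c * (a j * (j : ℝ) ^ (lam + 1)) ^ p := by
      rw [← mul_rpow (by positivity) (mul_nonneg (ha0 j) (by positivity))]
      refine rpow_le_rpow (mul_nonneg (ha0 _) (by positivity)) ?_ hp0.le
      calc a (4 * n) * (n : ℝ) ^ (lam + 1) ≤ a j * (4 ^ |lam + 1| * (j : ℝ) ^ (lam + 1)) := by
            gcongr
            · exact ha0 j
            · exact ha hj.2.le
        _ = _ := by ring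
    have hf : 0 ≤ (a j * (j : ℝ) ^ (lam + 1)) ^ p := by
      have := ha0 j
      positivity
    rw [div_le_div_iff₀ (by positivity) hj0]
    calc Q * j ≤ c * (a j * (j : ℝ) ^ (lam + 1)) ^ p * (4 * n) := by gcongr
      _ = _ := by ring
  have hcount := card_nsmul_le_sum _ _ _ hlower
  rw [Nat.card_Ico, nsmul_eq_mul, show 4 * n - n = 3 * n by omega] at hcount
  calc (∑ ν ∈ Icc (4 * n) (8 * n), a ν * (ν : ℝ) ^ lam) ^ p
      ≤ (5 * 8 ^ |lam| * (a (4 * n) * (n : ℝ) ^ (lam + 1))) ^ p := by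
        gcongr
        exact sum_nonneg fun ν _ ↦ mul_nonneg (ha0 ν) (by positivity)
    _ = (5 * 8 ^ |lam|) ^ p * (4 * c / 3) * (((3 * n : ℕ) : ℝ) * (Q / (c * (4 * n)))) := by
        rw [mul_rpow (by positivity) (mul_nonneg (ha0 _) (by positivity))]
        push_cast; field_simp; rfl
    _ ≤ _ := by gcongr

theorem exists_rpow_sum_Icc_le_sum_Icc {p : ℝ} (hp0 : 0 < p) (hp1 : p ≤ 1) (lam : ℝ) :
    ∃ C, 0 < C ∧ ∀ a : ℕ → ℝ, (∀ ν, 0 ≤ a ν) → Antitone a → ∀ n μ : ℕ, 1 ≤ n → 4 * n ≤ μ →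
      (∑ ν ∈ Icc (4 * n) μ, a ν * (ν : ℝ) ^ lam) ^ p ≤
        C * ∑ j ∈ Icc n μ, (a j * (j : ℝ) ^ (lam + 1)) ^ p / j := by
  obtain ⟨K, hK, hblock⟩ := exists_rpow_sum_Icc_le_sum_Ico hp0 lam
  set K' : ℝ := (2 * 4 ^ |lam|) ^ (1 - p)
  refine ⟨K + K', by positivity, fun a ha0 ha n μ hn hμ ↦ ?_⟩
  set S : ℕ → ℝ := fun μ ↦ (∑ ν ∈ Icc (4 * n) μ, a ν * (ν : ℝ) ^ lam) ^ p
  set f : ℕ → ℝ := fun j ↦ (a j * (j : ℝ) ^ (lam + 1)) ^ p / j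
  have hf : ∀ j, 0 ≤ f j := fun j ↦ by have := ha0 j; positivity
  have hS : S μ ≤ S (8 * n) + K' * ∑ j ∈ Ioc (8 * n) μ, f j := by
    rcases le_total μ (8 * n) with hle | hle
    · have hmono : S μ ≤ S (8 * n) :=
        rpow_le_rpow (sum_nonneg fun ν _ ↦ mul_nonneg (ha0 ν) (by positivity))
          (sum_le_sum_of_subset_of_nonneg (Icc_subset_Icc_right hle)
            fun ν _ _ ↦ mul_nonneg (ha0 ν) (by positivity)) hp0.le
      have : 0 ≤ K' * ∑ j ∈ Ioc (8 * n) μ, f j := by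
        have := sum_nonneg fun j (_ : j ∈ Ioc (8 * n) μ) ↦ hf j
        positivity
      linarith
    · rw [mul_sum]
      exact le_add_sum_Ioc_of_succ_le
        (fun ν hν ↦ rpow_sum_Icc_succ_le hp0 hp1 lam ha0 ha (by omega) (by omega)) hle
  have hdisj : Disjoint (Ico n (4 * n)) (Ioc (8 * n) μ) :=
    disjoint_left.2 fun j hj hj' ↦ by simp only [mem_Ico, mem_Ioc] at hj hj'; omega
  calc S μ ≤ K * ∑ j ∈ Ico n (4 * n), f j + K' * ∑ j ∈ Ioc (8 * n) μ, f j := by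
        linarith [hblock a ha0 ha n hn]
    _ ≤ (K + K') * (∑ j ∈ Ico n (4 * n), f j + ∑ j ∈ Ioc (8 * n) μ, f j) := by
        have hlow := sum_nonneg fun j (_ : j ∈ Ico n (4 * n)) ↦ hf j
        have hhigh := sum_nonneg fun j (_ : j ∈ Ioc (8 * n) μ) ↦ hf j
        have hK' : 0 ≤ K' := by positivity
        nlinarith [mul_nonneg hK.le hhigh, mul_nonneg hK' hlow]
    _ = (K + K') * ∑ j ∈ Ico n (4 * n) ∪ Ioc (8 * n) μ, f j := by rw [sum_union hdisj]
    _ ≤ (K + K') * ∑ j ∈ Icc n μ, f j := by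
        gcongr
        · exact fun j _ _ ↦ hf j
        · intro j hj
          simp only [mem_union, mem_Ico, mem_Ioc, mem_Icc] at hj ⊢
          omega

theorem stmt_11 (α lam p : ℝ) (hα : 0 < α) (hp0 : 0 < p) (hp1 : p ≤ 1) :
    ∃ C : ℝ, 0 < C ∧ ∀ a : ℕ → ℝ, (∀ ν, 0 ≤ a ν) → (∀ ν, a (ν + 1) ≤ a ν) →
      ∀ n m : ℕ, 1 ≤ n → 4 * n ≤ m →
        ∑ μ ∈ Icc (4 * n) m, (μ : ℝ) ^ (-α - 1) * (∑ ν ∈ Icc (4 * n) μ, a ν * (ν : ℝ) ^ lam) ^ p ≤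
          C * ∑ μ ∈ Icc n m, (μ : ℝ) ^ (-α - 1) * (a μ * (μ : ℝ) ^ (lam + 1)) ^ p := by
  obtain ⟨C, hC, hpointwise⟩ := exists_rpow_sum_Icc_le_sum_Icc hp0 hp1 lam
  refine ⟨C * (1 + 1 / α), by positivity, fun a ha0 hdec n m hn hm ↦ ?_⟩
  set f : ℕ → ℝ := fun j ↦ (a j * (j : ℝ) ^ (lam + 1)) ^ p / j
  have hf : ∀ j, 0 ≤ f j := fun j ↦ by have := ha0 j; positivity
  have hweight : ∀ j ∈ Icc n m,
      (j : ℝ) ^ (-α) * f j = (j : ℝ) ^ (-α - 1) * (a j * (j : ℝ) ^ (lam + 1)) ^ p := by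
    intro j hj
    rw [mem_Icc] at hj
    have hj0 : (j : ℝ) ≠ 0 := by exact_mod_cast (by omega : j ≠ 0)
    rw [rpow_sub_one hj0]
    ring
  calc ∑ μ ∈ Icc (4 * n) m, (μ : ℝ) ^ (-α - 1) * (∑ ν ∈ Icc (4 * n) μ, a ν * (ν : ℝ) ^ lam) ^ p
      ≤ ∑ μ ∈ Icc (4 * n) m, (μ : ℝ) ^ (-α - 1) * (C * ∑ j ∈ Icc n μ, f j) := by
        gcongr with μ hμ
        exact hpointwise a ha0 (antitone_nat_of_succ_le hdec) n μ hn (mem_Icc.1 hμ).1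
    _ ≤ C * ∑ μ ∈ Icc n m, (μ : ℝ) ^ (-α - 1) * ∑ j ∈ Icc n μ, f j := by
        simp_rw [mul_left_comm _ C, ← mul_sum]
        gcongr
        · exact fun μ _ _ ↦ mul_nonneg (by positivity) (sum_nonneg fun j _ ↦ hf j)
        · omega
    _ ≤ C * ((1 + 1 / α) * ∑ j ∈ Icc n m, (j : ℝ) ^ (-α) * f j) := by
        gcongr
        exact sum_Icc_mul_sum_Icc_le hα hf hn m
    _ = C * (1 + 1 / α) * ∑ μ ∈ Icc n m, (μ : ℝ) ^ (-α - 1) * (a μ * (μ : ℝ) ^ (lam + 1)) ^ p := by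
        rw [sum_congr rfl hweight, mul_assoc]
end

section
/- Let {a_ν} be a non-negative decreasing sequence, α > 0, λ ∈ ℝ, and p > 0. Then there exists C > 0 depending only on α, λ, p such that for every positive integer n, ∑_{μ=1}^{n} μ^{α-1} (∑_{ν=μ}^{n} a_ν ν^λ)^p ≥ C ∑_{μ=1}^{n} μ^{α-1} (a_μ μ^{λ+1})^p. -/
open Finset

theorem stmt_12 (α lam p : ℝ) (hα : 0 < α) (hp : 0 < p) :
    ∃ C : ℝ, 0 < C ∧ ∀ a : ℕ → ℝ, (∀ ν, 0 ≤ a ν) → (∀ ν, a (ν + 1) ≤ a ν) →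
      ∀ n : ℕ, 1 ≤ n →
        C * ∑ μ ∈ Icc 1 n, (μ : ℝ) ^ (α - 1) * (a μ * (μ : ℝ) ^ (lam + 1)) ^ p ≤
          ∑ μ ∈ Icc 1 n, (μ : ℝ) ^ (α - 1) * (∑ ν ∈ Icc μ n, a ν * (ν : ℝ) ^ lam) ^ p := by
  set β := α - 1 + (lam + 1) * p with hβdef
  set c1 : ℝ := min 1 (2 ^ lam) with hc1def
  have hc1pos : 0 < c1 := lt_min one_pos (Real.rpow_pos_of_pos two_pos lam)
  set c2 : ℝ := 3 ^ |β| with hc2def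
  have hc2pos : 0 < c2 := Real.rpow_pos_of_pos (by norm_num) _
  set K : ℝ := 2 * c2 / c1 ^ p with hKdef
  have hKnn : 0 ≤ K := by positivity
  refine ⟨(1 + K)⁻¹, by positivity, ?_⟩
  intro a ha hdec n hn
  have hanti : Antitone a := antitone_nat_of_succ_le hdec
  -- basic positivity of casts
  have hcast : ∀ μ : ℕ, 1 ≤ μ → (0:ℝ) < μ := fun μ hμ => by exact_mod_cast hμ
  -- ν^lam ≥ c1 * μ^lam for μ ≤ ν ≤ 2μ
  have hrb : ∀ μ ν : ℕ, 1 ≤ μ → μ ≤ ν → ν ≤ 2 * μ → c1 * (μ:ℝ) ^ lam ≤ (ν:ℝ) ^ lam := by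
    intro μ ν hμ hμν hν2
    have hμpos := hcast μ hμ
    have hνpos := hcast ν (hμ.trans hμν)
    have hmla : (0:ℝ) ≤ (μ:ℝ) ^ lam := (Real.rpow_pos_of_pos hμpos lam).le
    rcases le_or_gt 0 lam with h | h
    · calc c1 * (μ:ℝ) ^ lam ≤ 1 * (μ:ℝ) ^ lam := by
            exact mul_le_mul_of_nonneg_right (min_le_left _ _) hmla
        _ = (μ:ℝ) ^ lam := one_mul _
        _ ≤ (ν:ℝ) ^ lam := Real.rpow_le_rpow hμpos.le (by exact_mod_cast hμν) h
    · calc c1 * (μ:ℝ) ^ lam ≤ 2 ^ lam * (μ:ℝ) ^ lam := by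
            exact mul_le_mul_of_nonneg_right (min_le_right _ _) hmla
        _ = ((2 * μ : ℕ) : ℝ) ^ lam := by
            push_cast
            rw [Real.mul_rpow (by norm_num) hμpos.le]
        _ ≤ (ν:ℝ) ^ lam := by
            apply Real.rpow_le_rpow_of_nonpos hνpos (by exact_mod_cast hν2) h.le
  -- f and g
  set f : ℕ → ℝ := fun k => (k:ℝ) ^ (α - 1) * (a k * (k:ℝ) ^ (lam + 1)) ^ p with hfdef
  set g : ℕ → ℝ := fun μ => (μ:ℝ) ^ (α - 1) * (a (2 * μ) * (μ:ℝ) ^ (lam + 1)) ^ p with hgdef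
  have hfnn : ∀ k, 0 ≤ f k := by
    intro k
    apply mul_nonneg (Real.rpow_nonneg (Nat.cast_nonneg k) _)
    apply Real.rpow_nonneg
    exact mul_nonneg (ha k) (Real.rpow_nonneg (Nat.cast_nonneg k) _)
  have hgnn : ∀ μ, 0 ≤ g μ := by
    intro μ
    apply mul_nonneg (Real.rpow_nonneg (Nat.cast_nonneg μ) _)
    apply Real.rpow_nonneg
    exact mul_nonneg (ha _) (Real.rpow_nonneg (Nat.cast_nonneg μ) _)
  -- rewriting f in "collapsed" form
  have hcollapse : ∀ (b : ℝ) (k : ℕ), 0 ≤ b → 1 ≤ k →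
      (k:ℝ) ^ (α - 1) * (b * (k:ℝ) ^ (lam + 1)) ^ p = b ^ p * (k:ℝ) ^ β := by
    intro b k hb hk
    have hkpos := hcast k hk
    rw [Real.mul_rpow hb (Real.rpow_nonneg hkpos.le _), ← Real.rpow_mul hkpos.le]
    rw [hβdef, Real.rpow_add hkpos]
    ring
  -- per-term bound for A
  have hfk : ∀ μ k : ℕ, 1 ≤ μ → 2 * μ ≤ k → k ≤ 3 * μ → f k ≤ c2 * g μ := by
    intro μ k hμ h2 h3
    have hμpos := hcast μ hμ
    have hk1 : 1 ≤ k := le_trans (by omega) h2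
    have hkpos := hcast k hk1
    rw [hfdef, hgdef]
    simp only
    rw [hcollapse (a k) k (ha k) hk1, hcollapse (a (2 * μ)) μ (ha _) hμ]
    have hak : a k ^ p ≤ a (2 * μ) ^ p :=
      Real.rpow_le_rpow (ha k) (hanti h2) hp.le
    have hkβ : (k:ℝ) ^ β ≤ c2 * (μ:ℝ) ^ β := by
      have hq : (k:ℝ) = ((k:ℝ)/(μ:ℝ)) * μ := by field_simp
      rw [hq, Real.mul_rpow (by positivity) hμpos.le]
      have hq1 : (1:ℝ) ≤ (k:ℝ)/(μ:ℝ) := by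
        rw [le_div_iff₀ hμpos]; exact_mod_cast le_trans (by omega) h2
      have hq3 : (k:ℝ)/(μ:ℝ) ≤ 3 := by
        rw [div_le_iff₀ hμpos]; exact_mod_cast h3
      have hqb : ((k:ℝ)/(μ:ℝ)) ^ β ≤ c2 := by
        rcases le_or_gt 0 β with hb | hb
        · rw [hc2def, abs_of_nonneg hb]
          exact Real.rpow_le_rpow (by positivity) hq3 hb
        · calc ((k:ℝ)/(μ:ℝ)) ^ β ≤ 1 := Real.rpow_le_one_of_one_le_of_nonpos hq1 hb.le
            _ ≤ c2 := by
              rw [hc2def]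
              calc (1:ℝ) = (3:ℝ) ^ (0:ℝ) := (Real.rpow_zero 3).symm
                _ ≤ (3:ℝ) ^ |β| := Real.rpow_le_rpow_of_exponent_le (by norm_num) (abs_nonneg β)
      exact mul_le_mul_of_nonneg_right hqb (Real.rpow_nonneg hμpos.le _)
    calc a k ^ p * (k:ℝ) ^ β ≤ a (2*μ) ^ p * (c2 * (μ:ℝ) ^ β) := by
          apply mul_le_mul hak hkβ (Real.rpow_nonneg hkpos.le _)
          exact Real.rpow_nonneg (ha _) _
      _ = c2 * (a (2*μ) ^ p * (μ:ℝ) ^ β) := by ring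
  -- per-term lower bound for S
  have hT : ∀ μ : ℕ, 1 ≤ μ → 2 * μ ≤ n →
      c1 * (a (2 * μ) * (μ:ℝ) ^ (lam + 1)) ≤ ∑ ν ∈ Icc μ n, a ν * (ν:ℝ) ^ lam := by
    intro μ hμ h2n
    have hμpos := hcast μ hμ
    have hsub : Icc μ (2 * μ) ⊆ Icc μ n := Icc_subset_Icc le_rfl h2n
    have hnn : ∀ ν ∈ Icc μ n, 0 ≤ a ν * (ν:ℝ) ^ lam := by
      intro ν _
      exact mul_nonneg (ha ν) (Real.rpow_nonneg (Nat.cast_nonneg ν) _)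
    calc c1 * (a (2 * μ) * (μ:ℝ) ^ (lam + 1))
        = (μ:ℝ) * (a (2 * μ) * (c1 * (μ:ℝ) ^ lam)) := by
          rw [Real.rpow_add hμpos, Real.rpow_one]; ring
      _ ≤ ((μ:ℝ) + 1) * (a (2 * μ) * (c1 * (μ:ℝ) ^ lam)) := by
          apply mul_le_mul_of_nonneg_right (by linarith)
          exact mul_nonneg (ha _) (mul_nonneg hc1pos.le (Real.rpow_nonneg hμpos.le _))
      _ = (Icc μ (2 * μ)).card • (a (2 * μ) * (c1 * (μ:ℝ) ^ lam)) := by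
          rw [Nat.card_Icc]
          have : 2 * μ + 1 - μ = μ + 1 := by omega
          rw [this, nsmul_eq_mul]
          push_cast; ring
      _ ≤ ∑ ν ∈ Icc μ (2 * μ), a ν * (ν:ℝ) ^ lam := by
          apply Finset.card_nsmul_le_sum
          intro ν hν
          rw [mem_Icc] at hν
          rw [mul_comm (a (2*μ)), mul_comm (a ν)]
          apply mul_le_mul (hrb μ ν hμ hν.1 hν.2) (hanti hν.2) (ha _)
          exact Real.rpow_nonneg (Nat.cast_nonneg ν) _
      _ ≤ ∑ ν ∈ Icc μ n, a ν * (ν:ℝ) ^ lam :=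
          Finset.sum_le_sum_of_subset_of_nonneg hsub (fun ν hν _ => hnn ν hν)
  -- main assembly
  set m := n / 2 with hmdef
  set B : ℝ := ∑ μ ∈ Icc 1 m, g μ with hBdef
  set S : ℝ := ∑ μ ∈ Icc 1 n, (μ:ℝ) ^ (α - 1) * (∑ ν ∈ Icc μ n, a ν * (ν:ℝ) ^ lam) ^ p with hSdef
  have hSterm : ∀ μ ∈ Icc 1 n, 0 ≤ (μ:ℝ) ^ (α - 1) * (∑ ν ∈ Icc μ n, a ν * (ν:ℝ) ^ lam) ^ p := by
    intro μ _
    apply mul_nonneg (Real.rpow_nonneg (Nat.cast_nonneg μ) _)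
    apply Real.rpow_nonneg
    apply Finset.sum_nonneg
    intro ν _
    exact mul_nonneg (ha ν) (Real.rpow_nonneg (Nat.cast_nonneg ν) _)
  have hSnn : 0 ≤ S := Finset.sum_nonneg hSterm
  have hBnn : 0 ≤ B := Finset.sum_nonneg (fun μ _ => hgnn μ)
  -- c1^p * B ≤ S
  have hSB : c1 ^ p * B ≤ S := by
    rw [hBdef, Finset.mul_sum]
    calc ∑ μ ∈ Icc 1 m, c1 ^ p * g μ
        ≤ ∑ μ ∈ Icc 1 m, (μ:ℝ) ^ (α - 1) * (∑ ν ∈ Icc μ n, a ν * (ν:ℝ) ^ lam) ^ p := by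
          apply Finset.sum_le_sum
          intro μ hμ
          rw [mem_Icc] at hμ
          have h2n : 2 * μ ≤ n := by omega
          have hμpos := hcast μ hμ.1
          have hX : 0 ≤ a (2 * μ) * (μ:ℝ) ^ (lam + 1) :=
            mul_nonneg (ha _) (Real.rpow_nonneg hμpos.le _)
          rw [hgdef]
          simp only
          rw [mul_comm (c1 ^ p), mul_assoc, ← Real.mul_rpow (by positivity) hc1pos.le, mul_comm _ c1]
          apply mul_le_mul_of_nonneg_left _ (Real.rpow_nonneg hμpos.le _)
          exact Real.rpow_le_rpow (by positivity) (hT μ hμ.1 h2n) hp.le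
      _ ≤ S := by
          apply Finset.sum_le_sum_of_subset_of_nonneg
          · exact Icc_subset_Icc le_rfl (Nat.div_le_self n 2)
          · intro μ hμ _; exact hSterm μ hμ
  -- f 1 ≤ S
  have hf1 : f 1 ≤ S := by
    have h1mem : (1:ℕ) ∈ Icc 1 n := by rw [mem_Icc]; omega
    have hT1 : a 1 * (1:ℝ) ^ (lam + 1) ≤ ∑ ν ∈ Icc 1 n, a ν * (ν:ℝ) ^ lam := by
      rw [Real.one_rpow, mul_one]
      calc a 1 = a 1 * ((1:ℕ):ℝ) ^ lam := by rw [Nat.cast_one, Real.one_rpow, mul_one]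
        _ ≤ ∑ ν ∈ Icc 1 n, a ν * (ν:ℝ) ^ lam := by
            exact Finset.single_le_sum (f := fun ν : ℕ => a ν * (ν:ℝ) ^ lam)
              (fun ν _ => mul_nonneg (ha ν) (Real.rpow_nonneg (Nat.cast_nonneg ν) _)) h1mem
    calc f 1 ≤ ((1:ℕ):ℝ) ^ (α - 1) * (∑ ν ∈ Icc 1 n, a ν * (ν:ℝ) ^ lam) ^ p := by
          rw [hfdef]
          simp only [Nat.cast_one]
          apply mul_le_mul_of_nonneg_left _ (Real.rpow_nonneg zero_le_one _)
          apply Real.rpow_le_rpow _ _ hp.le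
          · exact mul_nonneg (ha 1) (Real.rpow_nonneg zero_le_one _)
          · exact_mod_cast hT1
      _ ≤ S := Finset.single_le_sum hSterm h1mem
  -- A ≤ f 1 + 2 * c2 * B
  have hA : ∑ k ∈ Icc 1 n, f k ≤ f 1 + 2 * c2 * B := by
    have hsplit : Icc 1 n = insert 1 (Icc 2 n) := by
      ext k
      simp only [mem_Icc, mem_insert]
      omega
    rw [hsplit, Finset.sum_insert (by simp)]
    have hE := (Icc 1 m).image (fun μ => 2 * μ)
    set E := (Icc 1 m).image (fun μ => 2 * μ) with hEdef
    set O := (Icc 1 m).image (fun μ => 2 * μ + 1) with hOdef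
    have hsub : Icc 2 n ⊆ E ∪ O := by
      intro k hk
      rw [mem_Icc] at hk
      rcases Nat.even_or_odd k with he | ho
      · have he2 : k % 2 = 0 := Nat.even_iff.mp he
        apply Finset.mem_union_left
        rw [hEdef, Finset.mem_image]
        refine ⟨k / 2, ?_, by omega⟩
        rw [mem_Icc, hmdef]
        constructor
        · omega
        · exact Nat.div_le_div_right hk.2
      · apply Finset.mem_union_right
        rw [hOdef, Finset.mem_image]
        have hodd : k % 2 = 1 := Nat.odd_iff.mp ho
        refine ⟨k / 2, ?_, by omega⟩
        rw [mem_Icc, hmdef]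
        constructor
        · omega
        · exact Nat.div_le_div_right hk.2
    have hdisj : Disjoint E O := by
      rw [Finset.disjoint_left]
      intro k hkE hkO
      rw [hEdef, Finset.mem_image] at hkE
      rw [hOdef, Finset.mem_image] at hkO
      obtain ⟨x, _, hx⟩ := hkE
      obtain ⟨y, _, hy⟩ := hkO
      omega
    have hEsum : ∑ k ∈ E, f k ≤ c2 * B := by
      rw [hEdef, Finset.sum_image (fun x _ y _ h => by omega), hBdef, Finset.mul_sum]
      apply Finset.sum_le_sum
      intro μ hμ
      rw [mem_Icc] at hμ
      exact hfk μ (2 * μ) hμ.1 le_rfl (by omega)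
    have hOsum : ∑ k ∈ O, f k ≤ c2 * B := by
      rw [hOdef, Finset.sum_image (fun x _ y _ h => by omega), hBdef, Finset.mul_sum]
      apply Finset.sum_le_sum
      intro μ hμ
      rw [mem_Icc] at hμ
      exact hfk μ (2 * μ + 1) hμ.1 (by omega) (by omega)
    have h2n : ∑ k ∈ Icc 2 n, f k ≤ 2 * c2 * B := by
      calc ∑ k ∈ Icc 2 n, f k ≤ ∑ k ∈ E ∪ O, f k :=
            Finset.sum_le_sum_of_subset_of_nonneg hsub (fun k _ _ => hfnn k)
        _ = ∑ k ∈ E, f k + ∑ k ∈ O, f k := Finset.sum_union hdisj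
        _ ≤ c2 * B + c2 * B := add_le_add hEsum hOsum
        _ = 2 * c2 * B := by ring
    linarith
  -- conclude
  have hgoal : ∑ k ∈ Icc 1 n, f k ≤ (1 + K) * S := by
    have hBS : 2 * c2 * B ≤ K * S := by
      rw [hKdef]
      rw [div_mul_eq_mul_div, le_div_iff₀ (by positivity)]
      calc 2 * c2 * B * c1 ^ p = 2 * c2 * (c1 ^ p * B) := by ring
        _ ≤ 2 * c2 * S := by
            apply mul_le_mul_of_nonneg_left hSB (by positivity)
        _ = 2 * c2 * S := rfl
    calc ∑ k ∈ Icc 1 n, f k ≤ f 1 + 2 * c2 * B := hA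
      _ ≤ S + K * S := add_le_add hf1 hBS
      _ = (1 + K) * S := by ring
  rw [show (∑ μ ∈ Icc 1 n, (μ:ℝ) ^ (α - 1) * (a μ * (μ:ℝ) ^ (lam + 1)) ^ p) = ∑ k ∈ Icc 1 n, f k from rfl]
  rw [inv_mul_le_iff₀ (by positivity)]
  exact hgoal
end

section
/- Let {a_ν} be a non-negative decreasing sequence, α > 0, λ ∈ ℝ, and p > 0. Then there exists C > 0 depending only on α, λ, p such that for every positive integer n, ∑_{μ=1}^{n} μ^{-α-1} (∑_{ν=1}^{μ} a_ν ν^λ)^p ≥ C ∑_{μ=1}^{n} μ^{-α-1} (a_μ μ^{λ+1})^p. -/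
open Finset

theorem stmt_13 (α lam p : ℝ) (hα : 0 < α) (hp : 0 < p) :
    ∃ C : ℝ, 0 < C ∧ ∀ a : ℕ → ℝ, (∀ ν, 0 ≤ a ν) → (∀ ν, a (ν + 1) ≤ a ν) →
      ∀ n : ℕ, 1 ≤ n →
        C * ∑ μ ∈ Icc 1 n, (μ : ℝ) ^ (-α - 1) * (a μ * (μ : ℝ) ^ (lam + 1)) ^ p ≤
          ∑ μ ∈ Icc 1 n, (μ : ℝ) ^ (-α - 1) * (∑ ν ∈ Icc 1 μ, a ν * (ν : ℝ) ^ lam) ^ p := by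
  set c : ℝ := (2:ℝ) ^ (-(max lam 0)) / 2 with hc
  have hcpos : 0 < c := by
    have : (0:ℝ) < (2:ℝ) ^ (-(max lam 0)) := Real.rpow_pos_of_pos (by norm_num) _
    positivity
  refine ⟨c ^ p, Real.rpow_pos_of_pos hcpos p, ?_⟩
  intro a ha hdec n hn
  have hanti : Antitone a := antitone_nat_of_succ_le hdec
  -- key: for μ ≥ 1, c * μ^(lam+1) ≤ ∑ ν^lam
  have key : ∀ μ : ℕ, 1 ≤ μ → c * (μ:ℝ) ^ (lam + 1) ≤ ∑ ν ∈ Icc 1 μ, (ν:ℝ) ^ lam := by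
    intro μ hμ
    have hμpos : (0:ℝ) < μ := by exact_mod_cast hμ
    set k := (μ + 1) / 2 with hk
    have hk1 : 1 ≤ k := by omega
    have hkμ : k ≤ μ := by omega
    have hkhalf : (μ:ℝ) / 2 ≤ k := by
      have h2 : μ ≤ 2 * k := by omega
      have := (Nat.cast_le (α := ℝ)).2 h2
      push_cast at this; linarith
    have hterm : ∀ ν ∈ Icc k μ, (2:ℝ)^(-(max lam 0)) * (μ:ℝ)^lam ≤ (ν:ℝ)^lam := by
      intro ν hν
      simp only [mem_Icc] at hν
      have hνpos : (0:ℝ) < ν := by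
        have : 1 ≤ ν := le_trans hk1 hν.1
        exact_mod_cast this
      have hνμ : (ν:ℝ) ≤ μ := by exact_mod_cast hν.2
      have hhalf : (μ:ℝ)/2 ≤ ν := le_trans hkhalf (by exact_mod_cast hν.1)
      rcases le_or_gt 0 lam with h0 | h0
      · rw [max_eq_left h0]
        calc (2:ℝ)^(-lam) * (μ:ℝ)^lam = ((μ:ℝ)/2)^lam := by
              rw [Real.div_rpow (le_of_lt hμpos) (by norm_num),
                  Real.rpow_neg (by norm_num)]
              ring
          _ ≤ (ν:ℝ)^lam := Real.rpow_le_rpow (by positivity) hhalf h0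
      · rw [max_eq_right h0.le, neg_zero, Real.rpow_zero, one_mul]
        exact Real.rpow_le_rpow_of_nonpos hνpos hνμ h0.le
    have hcard : (μ:ℝ)/2 ≤ ((Icc k μ).card : ℝ) := by
      rw [Nat.card_Icc]
      have hle : k ≤ μ + 1 := by omega
      have hc2 : ((μ + 1 - k : ℕ) : ℝ) = (μ:ℝ) + 1 - k := by
        push_cast [Nat.cast_sub hle]; ring
      have h3 : 2 * k ≤ μ + 1 := by omega
      have h4 := (Nat.cast_le (α := ℝ)).2 h3
      push_cast at h4
      rw [hc2]; linarith
    have hsum1 : ((Icc k μ).card : ℝ) * ((2:ℝ)^(-(max lam 0)) * (μ:ℝ)^lam) ≤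
        ∑ ν ∈ Icc k μ, (ν:ℝ)^lam := by
      have := Finset.card_nsmul_le_sum (Icc k μ) (fun ν => (ν:ℝ)^lam) _ hterm
      simpa [nsmul_eq_mul] using this
    have hsub : ∑ ν ∈ Icc k μ, (ν:ℝ)^lam ≤ ∑ ν ∈ Icc 1 μ, (ν:ℝ)^lam := by
      apply Finset.sum_le_sum_of_subset_of_nonneg
      · exact Finset.Icc_subset_Icc hk1 le_rfl
      · intro ν hν _
        simp only [mem_Icc] at hν
        have : (0:ℝ) < ν := by exact_mod_cast hν.1
        positivity
    have hM : (0:ℝ) ≤ (2:ℝ)^(-(max lam 0)) * (μ:ℝ)^lam := by positivity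
    calc c * (μ:ℝ)^(lam+1)
        = (μ:ℝ)/2 * ((2:ℝ)^(-(max lam 0)) * (μ:ℝ)^lam) := by
          rw [Real.rpow_add hμpos, Real.rpow_one, hc]; ring
      _ ≤ ((Icc k μ).card : ℝ) * ((2:ℝ)^(-(max lam 0)) * (μ:ℝ)^lam) :=
          mul_le_mul_of_nonneg_right hcard hM
      _ ≤ ∑ ν ∈ Icc k μ, (ν:ℝ)^lam := hsum1
      _ ≤ ∑ ν ∈ Icc 1 μ, (ν:ℝ)^lam := hsub
  rw [Finset.mul_sum]
  apply Finset.sum_le_sum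
  intro μ hμ
  simp only [mem_Icc] at hμ
  have hμ1 : 1 ≤ μ := hμ.1
  have hμpos : (0:ℝ) < μ := by exact_mod_cast hμ1
  have hX : (0:ℝ) ≤ a μ * (μ:ℝ)^(lam+1) :=
    mul_nonneg (ha μ) (Real.rpow_nonneg hμpos.le _)
  have hstep : c * (a μ * (μ:ℝ)^(lam+1)) ≤ ∑ ν ∈ Icc 1 μ, a ν * (ν:ℝ)^lam := by
    calc c * (a μ * (μ:ℝ)^(lam+1)) = a μ * (c * (μ:ℝ)^(lam+1)) := by ring
      _ ≤ a μ * ∑ ν ∈ Icc 1 μ, (ν:ℝ)^lam :=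
          mul_le_mul_of_nonneg_left (key μ hμ1) (ha μ)
      _ = ∑ ν ∈ Icc 1 μ, a μ * (ν:ℝ)^lam := by rw [Finset.mul_sum]
      _ ≤ ∑ ν ∈ Icc 1 μ, a ν * (ν:ℝ)^lam := by
          apply Finset.sum_le_sum
          intro ν hν
          simp only [mem_Icc] at hν
          have hνpos : (0:ℝ) < ν := by exact_mod_cast hν.1
          exact mul_le_mul_of_nonneg_right (hanti hν.2)
            (Real.rpow_nonneg hνpos.le _)
  have hfin : c^p * (a μ * (μ:ℝ)^(lam+1))^p ≤ (∑ ν ∈ Icc 1 μ, a ν * (ν:ℝ)^lam)^p := by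
    rw [← Real.mul_rpow hcpos.le hX]
    exact Real.rpow_le_rpow (by positivity) hstep hp.le
  calc c^p * ((μ:ℝ)^(-α-1) * (a μ * (μ:ℝ)^(lam+1))^p)
      = (μ:ℝ)^(-α-1) * (c^p * (a μ * (μ:ℝ)^(lam+1))^p) := by ring
    _ ≤ (μ:ℝ)^(-α-1) * (∑ ν ∈ Icc 1 μ, a ν * (ν:ℝ)^lam)^p :=
        mul_le_mul_of_nonneg_left hfin (by positivity)
end

section
/- Let {a_ν} be a non-negative decreasing sequence, α > 0, λ ∈ ℝ, and p ≥ 1. Then there exist constants C_1, C_2 > 0 depending only on α, λ, p such that for every positive integer n, C_1 ∑_{μ=1}^{n} μ^{α-1} (a_μ μ^{λ+1})^p ≤ ∑_{μ=1}^{n} μ^{α-1} (∑_{ν=μ}^{n} a_ν ν^λ)^p ≤ C_2 ∑_{μ=1}^{n} μ^{α-1} (a_μ μ^{λ+1})^p. -/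
/-!
Write `σ μ = ∑_{μ ≤ ν ≤ n} a ν ν^λ`, `S = ∑ μ^(α-1) (σ μ)^p` and `A = ∑ μ^(α-1) (a μ μ^(λ+1))^p`.

Upper bound: telescoping `σ μ ^ p` and the tangent-line inequality for `t ↦ t^p` give
`σ μ ^ p ≤ p ∑_{ν ≥ μ} a ν ν^λ (σ ν)^(p-1)`. Swapping the sums and using
`∑_{μ ≤ ν} μ^(α-1) ≤ C ν^α` bounds `S` by a multiple of `∑ ν^(α-1) (ν a ν ν^λ) (σ ν)^(p-1)`,
which Hölder bounds by `S^(1-1/p) A^(1/p)`; dividing by `S^(1-1/p)` gives `S ≤ C A`.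

Lower bound: since `a` decreases, the block `⌈μ/2⌉ ≤ ν ≤ μ` has at least `μ/2` terms, each at
least `2^(-|λ|) a μ μ^λ`, so `a μ μ^(λ+1) ≤ C σ ⌈μ/2⌉`; and `μ ↦ ⌈μ/2⌉` is at most two-to-one.
-/

open Finset

lemma rpow_sub_rpow_le_mul_rpow {p x y : ℝ} (hp : 1 ≤ p) (hy : 0 ≤ y) (hyx : y ≤ x) :
    x ^ p - y ^ p ≤ p * (x - y) * x ^ (p - 1) := by
  rcases hy.trans hyx |>.eq_or_lt with rfl | hx
  · simp [le_antisymm hyx hy]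
  have h := one_add_mul_self_le_rpow_one_add (s := y / x - 1) (by linarith [div_nonneg hy hx.le]) hp
  rw [add_sub_cancel, Real.div_rpow hy hx.le, le_div_iff₀ (by positivity)] at h
  rw [Real.rpow_sub_one hx.ne']
  field_simp at h ⊢
  linarith

lemma mul_rpow_le_rpow_sub_rpow {p x y : ℝ} (hp₀ : 0 ≤ p) (hp₁ : p ≤ 1) (hx : 0 < x)
    (hy : 0 ≤ y) : p * (x - y) * x ^ (p - 1) ≤ x ^ p - y ^ p := by
  have h := rpow_one_add_le_one_add_mul_self (s := y / x - 1)
    (by linarith [div_nonneg hy hx.le]) hp₀ hp₁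
  rw [add_sub_cancel, Real.div_rpow hy hx.le, div_le_iff₀ (by positivity)] at h
  rw [Real.rpow_sub_one hx.ne']
  field_simp at h ⊢
  linarith

lemma sum_Icc_rpow_sub_one_le {α : ℝ} (hα : 0 < α) (ν : ℕ) :
    ∑ μ ∈ Icc 1 ν, (μ : ℝ) ^ (α - 1) ≤ max 1 α⁻¹ * (ν : ℝ) ^ α := by
  rcases le_or_gt 1 α with hα₁ | hα₁
  · calc ∑ μ ∈ Icc 1 ν, (μ : ℝ) ^ (α - 1) ≤ ∑ _μ ∈ Icc 1 ν, (ν : ℝ) ^ (α - 1) :=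
          sum_le_sum fun μ hμ => Real.rpow_le_rpow (by positivity)
            (by exact_mod_cast (mem_Icc.1 hμ).2) (by linarith)
      _ = (ν : ℝ) ^ α := by
          rw [sum_const, Nat.card_Icc, nsmul_eq_mul, add_tsub_cancel_right, mul_comm,
            ← Real.rpow_add_one' (by positivity) (by linarith), sub_add_cancel]
      _ ≤ max 1 α⁻¹ * (ν : ℝ) ^ α := le_mul_of_one_le_left (by positivity) (le_max_left _ _)
  · refine le_trans ?_ (mul_le_mul_of_nonneg_right (le_max_right _ _) (by positivity))
    induction ν with
    | zero => simp [Real.zero_rpow hα.ne']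
    | succ ν ih =>
      rw [sum_Icc_succ_top (by omega)]
      have h := mul_rpow_le_rpow_sub_rpow hα.le hα₁.le (x := (ν + 1 : ℕ)) (y := ν)
        (by positivity) (by positivity)
      push_cast at h ⊢
      rw [add_sub_cancel_left, mul_one, ← le_div_iff₀' hα, sub_div] at h
      rw [div_eq_inv_mul, div_eq_inv_mul] at h
      linarith

lemma rpow_sum_Icc_le_sum {p : ℝ} (hp : 1 ≤ p) {b : ℕ → ℝ} (hb : ∀ ν, 0 ≤ b ν) (μ n : ℕ) :
    (∑ ν ∈ Icc μ n, b ν) ^ p ≤ ∑ ν ∈ Icc μ n, p * b ν * (∑ k ∈ Icc ν n, b k) ^ (p - 1) := by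
  set σ : ℕ → ℝ := fun ν => ∑ k ∈ Icc ν n, b k
  have hσ : ∀ ν, 0 ≤ σ ν := fun ν => sum_nonneg fun k _ => hb k
  have hp₀ : p ≠ 0 := by linarith
  rcases lt_or_ge n μ with hnμ | hμn
  · simp [Icc_eq_empty_of_lt hnμ, Real.zero_rpow hp₀]
  have hstep : ∀ ν ≤ n, σ ν = b ν + σ (ν + 1) := fun ν hν => by
    simp only [σ, Icc_add_one_left_eq_Ioc, add_sum_Ioc_eq_sum_Icc hν]
  have htelescope : σ μ ^ p = ∑ ν ∈ Icc μ n, (σ ν ^ p - σ (ν + 1) ^ p) := by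
    have h := sum_Icc_sub hμn fun ν => -σ ν ^ p
    have hσn : σ (n + 1) = 0 := by simp [σ]
    simp only [hσn, Real.zero_rpow hp₀, neg_zero, sub_neg_eq_add, zero_add] at h
    rw [← h]
    exact sum_congr rfl fun _ _ => by ring
  rw [htelescope]
  refine sum_le_sum fun ν hν => ?_
  have hν := hstep ν (mem_Icc.1 hν).2
  have h := rpow_sub_rpow_le_mul_rpow hp (hσ (ν + 1)) (by linarith [hb ν] : σ (ν + 1) ≤ σ ν)
  rwa [hν, add_sub_cancel_right, ← hν] at h

lemma sum_mul_mul_rpow_sub_one_le {ι : Type*} (s : Finset ι) {p : ℝ} (hp : 1 ≤ p)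
    {c x y : ι → ℝ} (hc : ∀ i, 0 ≤ c i) (hx : ∀ i, 0 ≤ x i) (hy : ∀ i, 0 ≤ y i)
    (hxy : ∀ i ∈ s, y i = 0 → x i = 0) :
    ∑ i ∈ s, c i * x i * y i ^ (p - 1) ≤
      (∑ i ∈ s, c i * y i ^ p) ^ (1 - p⁻¹) * (∑ i ∈ s, c i * x i ^ p) ^ p⁻¹ := by
  have hp₀ : p ≠ 0 := by linarith
  have h := Real.inner_le_weight_mul_Lp_of_nonneg s hp (fun i => c i * y i ^ p) (fun i => x i / y i)
    (fun i => mul_nonneg (hc i) (Real.rpow_nonneg (hy i) p))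
    (fun i => div_nonneg (hx i) (hy i))
  have hlin : ∀ i ∈ s, c i * x i * y i ^ (p - 1) = c i * y i ^ p * (x i / y i) := by
    intro i hi
    rcases (hy i).eq_or_lt with hyi | hyi
    · simp [hxy i hi hyi.symm]
    · rw [Real.rpow_sub_one hyi.ne']
      field_simp
  have hpow : ∀ i ∈ s, c i * y i ^ p * (x i / y i) ^ p = c i * x i ^ p := by
    intro i hi
    rcases (hy i).eq_or_lt with hyi | hyi
    · simp [hxy i hi hyi.symm, ← hyi, Real.zero_rpow hp₀]
    · rw [Real.div_rpow (hx i) (hy i)]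
      field_simp
  rwa [sum_congr rfl hlin, ← sum_congr rfl hpow]

lemma le_mul_rpow_of_le_mul_rpow_mul_rpow {S A K p : ℝ} (hp : 0 < p) (hS : 0 ≤ S) (hA : 0 ≤ A)
    (hK : 0 ≤ K) (h : S ≤ K * (S ^ (1 - p⁻¹) * A ^ p⁻¹)) : S ≤ K ^ p * A := by
  rcases hS.eq_or_lt with rfl | hS
  · positivity
  have hp' : 0 < p⁻¹ := inv_pos.2 hp
  rw [Real.rpow_sub hS, Real.rpow_one] at h
  rw [← Real.rpow_le_rpow_iff hS.le (by positivity) hp', Real.mul_rpow (by positivity) hA,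
    Real.rpow_rpow_inv hK hp.ne']
  have hSp : 0 < S ^ p⁻¹ := by positivity
  calc S ^ p⁻¹ = S / (S / S ^ p⁻¹) := by field_simp
    _ ≤ K * A ^ p⁻¹ := by
      rw [div_le_iff₀ (by positivity)]
      linarith

lemma sum_rpow_tail_le_weighted {α p : ℝ} (hα : 0 < α) (hp : 1 ≤ p) {b : ℕ → ℝ}
    (hb : ∀ ν, 0 ≤ b ν) (n : ℕ) :
    ∑ μ ∈ Icc 1 n, (μ : ℝ) ^ (α - 1) * (∑ ν ∈ Icc μ n, b ν) ^ p ≤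
      p * max 1 α⁻¹ * ∑ ν ∈ Icc 1 n,
        (ν : ℝ) ^ (α - 1) * (ν * b ν) * (∑ k ∈ Icc ν n, b k) ^ (p - 1) := by
  set σ : ℕ → ℝ := fun ν => ∑ k ∈ Icc ν n, b k
  have hterm : ∀ ν, 0 ≤ p * b ν * σ ν ^ (p - 1) := fun ν =>
    mul_nonneg (mul_nonneg (by linarith) (hb ν))
      (Real.rpow_nonneg (sum_nonneg fun k _ => hb k) _)
  calc ∑ μ ∈ Icc 1 n, (μ : ℝ) ^ (α - 1) * σ μ ^ p
      ≤ ∑ μ ∈ Icc 1 n, ∑ ν ∈ Icc μ n, (μ : ℝ) ^ (α - 1) * (p * b ν * σ ν ^ (p - 1)) := by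
        refine sum_le_sum fun μ _ => ?_
        rw [← mul_sum]
        exact mul_le_mul_of_nonneg_left (rpow_sum_Icc_le_sum hp hb μ n) (by positivity)
    _ = ∑ ν ∈ Icc 1 n, (∑ μ ∈ Icc 1 ν, (μ : ℝ) ^ (α - 1)) * (p * b ν * σ ν ^ (p - 1)) := by
        simp_rw [sum_mul]
        exact sum_comm' fun μ ν => by simp only [mem_Icc]; omega
    _ ≤ ∑ ν ∈ Icc 1 n, (max 1 α⁻¹ * (ν : ℝ) ^ α) * (p * b ν * σ ν ^ (p - 1)) :=
        sum_le_sum fun ν _ => mul_le_mul_of_nonneg_right (sum_Icc_rpow_sub_one_le hα ν) (hterm ν)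
    _ = p * max 1 α⁻¹ * ∑ ν ∈ Icc 1 n, (ν : ℝ) ^ (α - 1) * (ν * b ν) * σ ν ^ (p - 1) := by
        rw [mul_sum]
        refine sum_congr rfl fun ν _ => ?_
        have h := Real.rpow_add_one' (Nat.cast_nonneg ν) (by linarith : α - 1 + 1 ≠ 0)
        rw [sub_add_cancel] at h
        rw [h]
        ring

theorem sum_rpow_tail_le {α p : ℝ} (hα : 0 < α) (hp : 1 ≤ p) {b : ℕ → ℝ}
    (hb : ∀ ν, 0 ≤ b ν) (n : ℕ) :
    ∑ μ ∈ Icc 1 n, (μ : ℝ) ^ (α - 1) * (∑ ν ∈ Icc μ n, b ν) ^ p ≤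
      (p * max 1 α⁻¹) ^ p * ∑ μ ∈ Icc 1 n, (μ : ℝ) ^ (α - 1) * (μ * b μ) ^ p := by
  have hσ : ∀ ν, 0 ≤ ∑ k ∈ Icc ν n, b k := fun ν => sum_nonneg fun k _ => hb k
  have hvanish : ∀ ν ∈ Icc 1 n, ∑ k ∈ Icc ν n, b k = 0 → (ν : ℝ) * b ν = 0 := by
    intro ν hν h
    have : b ν ≤ ∑ k ∈ Icc ν n, b k :=
      single_le_sum (fun k _ => hb k) (mem_Icc.2 ⟨le_rfl, (mem_Icc.1 hν).2⟩)
    rw [le_antisymm (h ▸ this) (hb ν), mul_zero]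
  refine le_mul_rpow_of_le_mul_rpow_mul_rpow (by linarith) (sum_nonneg fun μ _ => ?_)
    (sum_nonneg fun μ _ => ?_) (by positivity) ?_
  · exact mul_nonneg (by positivity) (Real.rpow_nonneg (hσ μ) _)
  · exact mul_nonneg (by positivity) (Real.rpow_nonneg (mul_nonneg (by positivity) (hb μ)) _)
  refine (sum_rpow_tail_le_weighted hα hp hb n).trans (mul_le_mul_of_nonneg_left ?_ (by positivity))
  exact sum_mul_mul_rpow_sub_one_le _ hp (fun ν => by positivity)
    (fun ν => mul_nonneg (by positivity) (hb ν)) hσ hvanish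

lemma rpow_le_two_rpow_abs_mul {x y β : ℝ} (hx : 0 < x) (hxy : x ≤ 2 * y) (hyx : y ≤ 2 * x) :
    x ^ β ≤ 2 ^ |β| * y ^ β := by
  have hy : 0 < y := by linarith
  rw [← div_le_iff₀ (by positivity), ← Real.div_rpow hx.le hy.le]
  rcases le_total 0 β with hβ | hβ
  · rw [abs_of_nonneg hβ]
    exact Real.rpow_le_rpow (by positivity) ((div_le_iff₀ hy).2 hxy) hβ
  · rw [abs_of_nonpos hβ, Real.rpow_neg zero_le_two, ← Real.inv_rpow zero_le_two]
    exact Real.rpow_le_rpow_of_nonpos (by positivity) ((le_div_iff₀ hy).2 (by linarith)) hβ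

lemma sum_Icc_comp_half_le {f : ℕ → ℝ} (hf : ∀ k, 0 ≤ f k) (n : ℕ) :
    ∑ μ ∈ Icc 1 n, f ((μ + 1) / 2) ≤ 2 * ∑ k ∈ Icc 1 n, f k := by
  have hdouble : ∀ m, ∑ μ ∈ Icc 1 (2 * m), f ((μ + 1) / 2) = 2 * ∑ k ∈ Icc 1 m, f k := by
    intro m
    induction m with
    | zero => simp
    | succ m ih =>
      rw [show 2 * (m + 1) = 2 * m + 1 + 1 by ring, sum_Icc_succ_top (by omega),
        sum_Icc_succ_top (by omega), ih, sum_Icc_succ_top (by omega),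
        show (2 * m + 1 + 1) / 2 = m + 1 by omega, show (2 * m + 1 + 1 + 1) / 2 = m + 1 by omega]
      ring
  rw [← hdouble]
  exact sum_le_sum_of_subset_of_nonneg (Icc_subset_Icc_right (by omega)) fun _ _ _ => hf _

lemma mul_rpow_le_sum_Icc_half {a : ℕ → ℝ} (ha : ∀ ν, 0 ≤ a ν) (ha' : Antitone a) (lam : ℝ)
    {μ n : ℕ} (hμ : 1 ≤ μ) (hμn : μ ≤ n) :
    a μ * (μ : ℝ) ^ (lam + 1) ≤ 2 * 2 ^ |lam| * ∑ ν ∈ Icc ((μ + 1) / 2) n, a ν * (ν : ℝ) ^ lam := by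
  set m := (μ + 1) / 2
  have hblock : ∀ ν ∈ Icc m μ, a μ * (μ : ℝ) ^ lam ≤ 2 ^ |lam| * (a ν * (ν : ℝ) ^ lam) := by
    intro ν hν
    obtain ⟨hmν, hνμ⟩ := mem_Icc.1 hν
    have hpow : (μ : ℝ) ^ lam ≤ 2 ^ |lam| * (ν : ℝ) ^ lam :=
      rpow_le_two_rpow_abs_mul (by positivity) (by norm_cast; omega) (by norm_cast; omega)
    calc a μ * (μ : ℝ) ^ lam ≤ a ν * (2 ^ |lam| * (ν : ℝ) ^ lam) :=
          mul_le_mul (ha' hνμ) hpow (by positivity) (ha ν)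
      _ = 2 ^ |lam| * (a ν * (ν : ℝ) ^ lam) := by ring
  have hcard : (μ : ℝ) ≤ 2 * #(Icc m μ) := by
    rw [Nat.card_Icc]
    norm_cast
    omega
  calc a μ * (μ : ℝ) ^ (lam + 1) = (μ : ℝ) * (a μ * (μ : ℝ) ^ lam) := by
        rw [Real.rpow_add_one (by positivity)]
        ring
    _ ≤ 2 * #(Icc m μ) * (a μ * (μ : ℝ) ^ lam) :=
        mul_le_mul_of_nonneg_right hcard (mul_nonneg (ha μ) (by positivity))
    _ = 2 * ∑ _ν ∈ Icc m μ, a μ * (μ : ℝ) ^ lam := by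
        rw [sum_const, nsmul_eq_mul]
        ring
    _ ≤ 2 * ∑ ν ∈ Icc m μ, 2 ^ |lam| * (a ν * (ν : ℝ) ^ lam) :=
        mul_le_mul_of_nonneg_left (sum_le_sum hblock) zero_le_two
    _ ≤ 2 * ∑ ν ∈ Icc m n, 2 ^ |lam| * (a ν * (ν : ℝ) ^ lam) :=
        mul_le_mul_of_nonneg_left (sum_le_sum_of_subset_of_nonneg (Icc_subset_Icc_right hμn)
          fun ν _ _ => mul_nonneg (by positivity) (mul_nonneg (ha ν) (by positivity))) zero_le_two
    _ = 2 * 2 ^ |lam| * ∑ ν ∈ Icc m n, a ν * (ν : ℝ) ^ lam := by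
        rw [← mul_sum]
        ring

theorem sum_rpow_le_sum_rpow_tail {a : ℕ → ℝ} (ha : ∀ ν, 0 ≤ a ν) (ha' : Antitone a)
    (α lam : ℝ) {p : ℝ} (hp : 0 ≤ p) (n : ℕ) :
    ∑ μ ∈ Icc 1 n, (μ : ℝ) ^ (α - 1) * (a μ * (μ : ℝ) ^ (lam + 1)) ^ p ≤
      2 * 2 ^ |α - 1| * (2 * 2 ^ |lam|) ^ p *
        ∑ μ ∈ Icc 1 n, (μ : ℝ) ^ (α - 1) * (∑ ν ∈ Icc μ n, a ν * (ν : ℝ) ^ lam) ^ p := by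
  set g : ℕ → ℝ := fun k => (k : ℝ) ^ (α - 1) * (∑ ν ∈ Icc k n, a ν * (ν : ℝ) ^ lam) ^ p
  have hg : ∀ k, 0 ≤ g k := fun k =>
    mul_nonneg (by positivity)
      (Real.rpow_nonneg (sum_nonneg fun ν _ => mul_nonneg (ha ν) (by positivity)) _)
  have hterm : ∀ μ ∈ Icc 1 n, (μ : ℝ) ^ (α - 1) * (a μ * (μ : ℝ) ^ (lam + 1)) ^ p ≤
      2 ^ |α - 1| * (2 * 2 ^ |lam|) ^ p * g ((μ + 1) / 2) := by
    intro μ hμ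
    obtain ⟨hμ1, hμn⟩ := mem_Icc.1 hμ
    have hweight : (μ : ℝ) ^ (α - 1) ≤ 2 ^ |α - 1| * (((μ + 1) / 2 : ℕ) : ℝ) ^ (α - 1) :=
      rpow_le_two_rpow_abs_mul (by positivity) (by norm_cast; omega) (by norm_cast; omega)
    have haμ : 0 ≤ a μ * (μ : ℝ) ^ (lam + 1) := mul_nonneg (ha μ) (by positivity)
    have hblock := Real.rpow_le_rpow haμ (mul_rpow_le_sum_Icc_half ha ha' lam hμ1 hμn) hp
    rw [Real.mul_rpow (by positivity) (sum_nonneg fun ν _ => mul_nonneg (ha ν) (by positivity))]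
      at hblock
    calc (μ : ℝ) ^ (α - 1) * (a μ * (μ : ℝ) ^ (lam + 1)) ^ p
        ≤ (2 ^ |α - 1| * (((μ + 1) / 2 : ℕ) : ℝ) ^ (α - 1)) *
            ((2 * 2 ^ |lam|) ^ p * (∑ ν ∈ Icc ((μ + 1) / 2) n, a ν * (ν : ℝ) ^ lam) ^ p) :=
          mul_le_mul hweight hblock (Real.rpow_nonneg haμ p) (by positivity)
      _ = 2 ^ |α - 1| * (2 * 2 ^ |lam|) ^ p * g ((μ + 1) / 2) := by ring
  calc ∑ μ ∈ Icc 1 n, (μ : ℝ) ^ (α - 1) * (a μ * (μ : ℝ) ^ (lam + 1)) ^ p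
      ≤ ∑ μ ∈ Icc 1 n, 2 ^ |α - 1| * (2 * 2 ^ |lam|) ^ p * g ((μ + 1) / 2) := sum_le_sum hterm
    _ ≤ 2 ^ |α - 1| * (2 * 2 ^ |lam|) ^ p * (2 * ∑ k ∈ Icc 1 n, g k) := by
        rw [← mul_sum]
        exact mul_le_mul_of_nonneg_left (sum_Icc_comp_half_le hg n) (by positivity)
    _ = 2 * 2 ^ |α - 1| * (2 * 2 ^ |lam|) ^ p * ∑ k ∈ Icc 1 n, g k := by ring

theorem stmt_14 (α lam p : ℝ) (hα : 0 < α) (hp : 1 ≤ p) :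
    ∃ C₁ C₂ : ℝ, 0 < C₁ ∧ 0 < C₂ ∧ ∀ a : ℕ → ℝ, (∀ ν, 0 ≤ a ν) → (∀ ν, a (ν + 1) ≤ a ν) →
      ∀ n : ℕ, 1 ≤ n →
        C₁ * ∑ μ ∈ Icc 1 n, (μ : ℝ) ^ (α - 1) * (a μ * (μ : ℝ) ^ (lam + 1)) ^ p ≤
          ∑ μ ∈ Icc 1 n, (μ : ℝ) ^ (α - 1) * (∑ ν ∈ Icc μ n, a ν * (ν : ℝ) ^ lam) ^ p ∧
        ∑ μ ∈ Icc 1 n, (μ : ℝ) ^ (α - 1) * (∑ ν ∈ Icc μ n, a ν * (ν : ℝ) ^ lam) ^ p ≤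
          C₂ * ∑ μ ∈ Icc 1 n, (μ : ℝ) ^ (α - 1) * (a μ * (μ : ℝ) ^ (lam + 1)) ^ p := by
  have hp₀ : 0 < p := by linarith
  refine ⟨(2 * 2 ^ |α - 1| * (2 * 2 ^ |lam|) ^ p)⁻¹, (p * max 1 α⁻¹) ^ p, by positivity,
    by positivity, fun a ha hmono n _ => ⟨?_, ?_⟩⟩
  · rw [inv_mul_le_iff₀ (by positivity)]
    exact sum_rpow_le_sum_rpow_tail ha (antitone_nat_of_succ_le hmono) α lam hp₀.le n
  · refine (sum_rpow_tail_le hα hp (b := fun ν => a ν * (ν : ℝ) ^ lam)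
      (fun ν => mul_nonneg (ha ν) (by positivity)) n).trans_eq ?_
    refine congrArg _ (sum_congr rfl fun μ hμ => ?_)
    rw [Real.rpow_add_one (by have := (mem_Icc.1 hμ).1; positivity)]
    congr 2
    ring
end

section
/- Let {b_ν} be a non-negative sequence, α > 0, p ≥ 1, and n < m positive integers. Then there exists C > 0 depending only on α and p such that ∑_{μ=n}^{m} μ^{α-1} (∑_{ν=μ}^{m} b_ν)^p ≤ C ∑_{μ=n}^{m} μ^{α-1} (μ b_μ)^p. -/
open Finset

lemma HL_key_tail {t : ℝ} (ht : 1 < t) {a : ℝ} (ha : 2 ≤ a) :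
    (t - 1) * a ^ (-t) + a ^ (1 - t) ≤ (a - 1) ^ (1 - t) := by
  have ha0 : (0:ℝ) < a := by linarith
  have ha1 : (0:ℝ) < a - 1 := by linarith
  have hu : (0:ℝ) < 1 - 1/a := by
    rw [sub_pos, div_lt_one ha0]; linarith
  have hlog : Real.log (1 - 1/a) ≤ -(1/a) := by
    have := Real.log_le_sub_one_of_pos hu
    linarith
  have hexp : 1 + (t-1) * (1/a) ≤ (1 - 1/a) ^ (1 - t) := by
    rw [Real.rpow_def_of_pos hu]
    have h1 : (1-t) * Real.log (1 - 1/a) ≥ (t-1) * (1/a) := by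
      have := mul_le_mul_of_nonpos_left hlog (by linarith : (1:ℝ)-t ≤ 0)
      nlinarith
    calc 1 + (t-1)*(1/a) ≤ (1-t) * Real.log (1 - 1/a) + 1 := by linarith
    _ ≤ Real.exp ((1-t) * Real.log (1 - 1/a)) := Real.add_one_le_exp _
    _ = Real.exp (Real.log (1 - 1/a) * (1-t)) := by ring_nf
  have hsplit : (a - 1) ^ (1 - t) = a ^ (1-t) * (1 - 1/a) ^ (1-t) := by
    rw [← Real.mul_rpow ha0.le hu.le]
    congr 1
    field_simp
  rw [hsplit]
  have hmul := mul_le_mul_of_nonneg_left hexp (Real.rpow_nonneg ha0.le (1-t))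
  have hpow : a ^ (1-t) * (1/a) = a ^ (-t) := by
    rw [one_div, ← Real.rpow_neg_one a, ← Real.rpow_add ha0]
    congr 1; ring
  have h2 : a^(1-t) * (1 + (t-1)*(1/a)) = a^(1-t) + (t-1)*a^(-t) := by
    rw [← hpow]; ring
  linarith [hmul, h2.symm.le]

lemma HL_tail_aux {t : ℝ} (ht : 1 < t) (μ : ℕ) (hμ : 1 ≤ μ) {m : ℕ} (hμm : μ ≤ m) :
    ∑ ν ∈ Icc (μ+1) m, (t-1) * (ν:ℝ) ^ (-t) ≤ (μ:ℝ) ^ (1-t) - (m:ℝ) ^ (1-t) := by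
  induction m, hμm using Nat.le_induction with
  | base => rw [Finset.Icc_eq_empty (by omega)]; simp
  | succ m hm ih =>
    rw [Finset.sum_Icc_succ_top (by omega)]
    have hkey : (t-1) * ((m:ℝ)+1) ^ (-t) + ((m:ℝ)+1) ^ (1-t) ≤ (m:ℝ) ^ (1-t) := by
      have h2 : (2:ℝ) ≤ (m:ℝ)+1 := by
        have : (1:ℝ) ≤ (m:ℝ) := by exact_mod_cast (by omega : 1 ≤ m)
        linarith
      have := HL_key_tail ht h2
      simpa using this
    push_cast
    linarith

lemma HL_tail {t : ℝ} (ht : 1 < t) (μ m : ℕ) (hμ : 1 ≤ μ) :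
    ∑ ν ∈ Icc μ m, (ν:ℝ) ^ (-t) ≤ (1 + 1/(t-1)) * (μ:ℝ) ^ (1-t) := by
  have hμ0 : (0:ℝ) < μ := by exact_mod_cast hμ
  have hμ1 : (1:ℝ) ≤ μ := by exact_mod_cast hμ
  have ht1 : (0:ℝ) < t - 1 := by linarith
  have hmono : (μ:ℝ) ^ (-t) ≤ (μ:ℝ) ^ (1-t) :=
    Real.rpow_le_rpow_of_exponent_le hμ1 (by linarith)
  rcases le_or_gt μ m with h | h
  · have hset : Icc μ m = insert μ (Icc (μ+1) m) := by
      ext x; simp only [mem_Icc, mem_insert]; omega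
    rw [hset, Finset.sum_insert (by simp)]
    have htail := HL_tail_aux ht μ hμ h
    have htail2 : ∑ ν ∈ Icc (μ+1) m, (ν:ℝ) ^ (-t) ≤ ((μ:ℝ) ^ (1-t)) / (t-1) := by
      rw [le_div_iff₀ ht1]
      have hm0 : (m:ℝ) ^ (1-t) ≥ 0 := Real.rpow_nonneg (by positivity) _
      calc (∑ ν ∈ Icc (μ+1) m, (ν:ℝ) ^ (-t)) * (t-1)
          = ∑ ν ∈ Icc (μ+1) m, (t-1) * (ν:ℝ) ^ (-t) := by
            rw [Finset.sum_mul]; exact Finset.sum_congr rfl fun ν _ => by ring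
        _ ≤ (μ:ℝ) ^ (1-t) - (m:ℝ) ^ (1-t) := htail
        _ ≤ (μ:ℝ) ^ (1-t) := by linarith
    calc (μ:ℝ) ^ (-t) + ∑ ν ∈ Icc (μ+1) m, (ν:ℝ) ^ (-t)
        ≤ (μ:ℝ) ^ (1-t) + ((μ:ℝ) ^ (1-t)) / (t-1) := add_le_add hmono htail2
      _ = (1 + 1/(t-1)) * (μ:ℝ) ^ (1-t) := by ring
  · rw [Finset.Icc_eq_empty (by omega)]
    simp only [Finset.sum_empty]
    positivity

-- pointwise for the head sum, case -1 < e < 0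
lemma HL_key_head {e : ℝ} (he : -1 < e) (he0 : e < 0) {a : ℝ} (ha : 1 ≤ a) :
    (e+1) * a ^ e ≤ a ^ (e+1) - (a-1) ^ (e+1) := by
  have ha0 : (0:ℝ) < a := by linarith
  have hs0 : (0:ℝ) < e + 1 := by linarith
  have hs1 : e + 1 ≤ 1 := by linarith
  have hu0 : (0:ℝ) ≤ 1 - 1/a := by
    rw [sub_nonneg, div_le_one ha0]; linarith
  -- AM-GM: (1-1/a)^(e+1) * 1^(1-(e+1)) ≤ (e+1)*(1-1/a) + (1-(e+1))*1
  have hamgm := Real.geom_mean_le_arith_mean2_weighted hs0.le (by linarith : (0:ℝ) ≤ 1-(e+1))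
    hu0 zero_le_one (by ring)
  simp only [Real.one_rpow, mul_one] at hamgm
  -- so (1-1/a)^(e+1) ≤ 1 - (e+1)/a
  have h1 : (1 - 1/a) ^ (e+1) ≤ 1 - (e+1) * (1/a) := by
    calc (1 - 1/a) ^ (e+1) ≤ (e+1)*(1-1/a) + (1-(e+1)) := hamgm
      _ = 1 - (e+1)*(1/a) := by ring
  have hsplit : (a - 1) ^ (e+1) = a ^ (e+1) * (1 - 1/a) ^ (e+1) := by
    rw [← Real.mul_rpow ha0.le hu0]
    congr 1
    field_simp
  have hpow : a ^ (e+1) * (1/a) = a ^ e := by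
    rw [one_div, ← Real.rpow_neg_one a, ← Real.rpow_add ha0]
    congr 1; ring
  have hmul := mul_le_mul_of_nonneg_left h1 (Real.rpow_nonneg ha0.le (e+1))
  have h2 : a^(e+1) * (1 - (e+1)*(1/a)) = a^(e+1) - (e+1)*a^e := by
    rw [← hpow]; ring
  rw [hsplit]
  linarith [hmul, h2.symm.le]

lemma HL_head_aux {e : ℝ} (he : -1 < e) (he0 : e < 0) (ν : ℕ) :
    ∑ μ ∈ Icc 1 ν, (e+1) * (μ:ℝ) ^ e ≤ (ν:ℝ) ^ (e+1) := by
  induction ν with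
  | zero =>
    rw [Finset.Icc_eq_empty (by omega)]
    simp [Real.zero_rpow (by linarith : e+1 ≠ 0)]
  | succ ν ih =>
    rw [Finset.sum_Icc_succ_top (by omega)]
    have hkey := HL_key_head he he0 (a := (ν:ℝ)+1) (by have := Nat.cast_nonneg (α := ℝ) ν; linarith)
    have : ((ν:ℝ)+1) - 1 = (ν:ℝ) := by ring
    rw [this] at hkey
    push_cast
    linarith

lemma HL_head {e : ℝ} (he : -1 < e) (ν : ℕ) (hν : 1 ≤ ν) :
    ∑ μ ∈ Icc 1 ν, (μ:ℝ) ^ e ≤ (1 + 1/(e+1)) * (ν:ℝ) ^ (e+1) := by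
  have hν0 : (0:ℝ) < ν := by exact_mod_cast hν
  have hν1 : (1:ℝ) ≤ ν := by exact_mod_cast hν
  have hs0 : (0:ℝ) < e + 1 := by linarith
  rcases lt_or_ge e 0 with h | h
  · have := HL_head_aux he h ν
    have h2 : ∑ μ ∈ Icc 1 ν, (μ:ℝ) ^ e ≤ (ν:ℝ) ^ (e+1) / (e+1) := by
      rw [le_div_iff₀ hs0]
      calc (∑ μ ∈ Icc 1 ν, (μ:ℝ) ^ e) * (e+1)
          = ∑ μ ∈ Icc 1 ν, (e+1) * (μ:ℝ) ^ e := by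
            rw [Finset.sum_mul]; exact Finset.sum_congr rfl fun μ _ => by ring
        _ ≤ (ν:ℝ) ^ (e+1) := this
    have h3 : (ν:ℝ) ^ (e+1) / (e+1) ≤ (1 + 1/(e+1)) * (ν:ℝ) ^ (e+1) := by
      have hnn : (0:ℝ) ≤ (ν:ℝ) ^ (e+1) := Real.rpow_nonneg hν0.le _
      rw [div_eq_mul_one_div, mul_comm]
      have : 1/(e+1) ≤ 1 + 1/(e+1) := by linarith
      exact mul_le_mul_of_nonneg_right this hnn
    linarith
  · -- e ≥ 0 : each term ≤ ν^e
    have hbound : ∑ μ ∈ Icc 1 ν, (μ:ℝ) ^ e ≤ ∑ _μ ∈ Icc 1 ν, (ν:ℝ) ^ e := by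
      refine Finset.sum_le_sum fun μ hμ => ?_
      have : (μ:ℝ) ≤ (ν:ℝ) := by exact_mod_cast (Finset.mem_Icc.mp hμ).2
      exact Real.rpow_le_rpow (by positivity) this h
    have hcard : ∑ _μ ∈ Icc 1 ν, (ν:ℝ) ^ e = (ν:ℝ) * (ν:ℝ) ^ e := by
      rw [Finset.sum_const, Nat.card_Icc]
      simp [nsmul_eq_mul]
    have hpow : (ν:ℝ) * (ν:ℝ) ^ e = (ν:ℝ) ^ (e+1) := by
      rw [← Real.rpow_one_add' hν0.le (by linarith)]
      congr 1; ring
    have hfac : (ν:ℝ) ^ (e+1) ≤ (1 + 1/(e+1)) * (ν:ℝ) ^ (e+1) := by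
      have hnn : (0:ℝ) ≤ (ν:ℝ) ^ (e+1) := Real.rpow_nonneg hν0.le _
      nlinarith [one_div_pos.mpr hs0]
    calc ∑ μ ∈ Icc 1 ν, (μ:ℝ) ^ e ≤ (ν:ℝ) * (ν:ℝ) ^ e := by rw [← hcard]; exact hbound
      _ = (ν:ℝ) ^ (e+1) := hpow
      _ ≤ _ := hfac
lemma HL_swap (n m : ℕ) (f : ℕ → ℕ → ℝ) :
    ∑ μ ∈ Icc n m, ∑ ν ∈ Icc μ m, f μ ν = ∑ ν ∈ Icc n m, ∑ μ ∈ Icc n ν, f μ ν := by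
  refine Finset.sum_comm' ?_
  intro μ ν
  simp only [mem_Icc]
  omega

theorem stmt_16 (α p : ℝ) (hα : 0 < α) (hp : 1 ≤ p) :
    ∃ C : ℝ, 0 < C ∧ ∀ b : ℕ → ℝ, (∀ ν, 0 ≤ b ν) →
      ∀ n m : ℕ, 1 ≤ n → n < m →
        ∑ μ ∈ Icc n m, (μ : ℝ) ^ (α - 1) * (∑ ν ∈ Icc μ m, b ν) ^ p ≤
          C * ∑ μ ∈ Icc n m, (μ : ℝ) ^ (α - 1) * ((μ : ℝ) * b μ) ^ p := by
  rcases eq_or_lt_of_le hp with hp1 | hp1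
  · -- case p = 1
    subst hp1
    refine ⟨1 + 1/α, by positivity, ?_⟩
    intro b hb n m hn hnm
    simp only [Real.rpow_one]
    have h1 : ∑ μ ∈ Icc n m, (μ:ℝ)^(α-1) * (∑ ν ∈ Icc μ m, b ν)
        = ∑ ν ∈ Icc n m, ∑ μ ∈ Icc n ν, (μ:ℝ)^(α-1) * b ν := by
      rw [← HL_swap]
      exact Finset.sum_congr rfl fun μ _ => Finset.mul_sum _ _ _
    rw [h1, Finset.mul_sum]
    refine Finset.sum_le_sum fun ν hν => ?_
    have hν1 : 1 ≤ ν := le_trans hn (Finset.mem_Icc.mp hν).1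
    have hν0 : (0:ℝ) < ν := by exact_mod_cast hν1
    have hsub : ∑ μ ∈ Icc n ν, (μ:ℝ)^(α-1) ≤ ∑ μ ∈ Icc 1 ν, (μ:ℝ)^(α-1) := by
      refine Finset.sum_le_sum_of_subset_of_nonneg ?_ fun μ _ _ => Real.rpow_nonneg μ.cast_nonneg _
      exact Finset.Icc_subset_Icc_left hn
    have hhead := HL_head (e := α - 1) (by linarith) ν hν1
    rw [sub_add_cancel] at hhead
    have hsum : ∑ μ ∈ Icc n ν, (μ:ℝ)^(α-1) * b ν = (∑ μ ∈ Icc n ν, (μ:ℝ)^(α-1)) * b ν :=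
      (Finset.sum_mul _ _ _).symm
    rw [hsum]
    have hfac : (∑ μ ∈ Icc n ν, (μ:ℝ)^(α-1)) * b ν ≤ ((1 + 1/α) * (ν:ℝ)^α) * b ν :=
      mul_le_mul_of_nonneg_right (le_trans hsub hhead) (hb ν)
    refine le_trans hfac (le_of_eq ?_)
    have hpow : (ν:ℝ)^α = (ν:ℝ)^(α-1) * (ν:ℝ) := by
      have h5 := Real.rpow_add hν0 (α-1) 1
      rw [Real.rpow_one] at h5
      rw [← h5]; congr 1; ring
    rw [hpow]; ring
  · -- case 1 < p
    have hp0 : (0:ℝ) < p := by linarith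
    have hpm1 : (0:ℝ) < p - 1 := by linarith
    set a := min α 1 with hadef
    have ha0 : 0 < a := lt_min hα one_pos
    have ha1 : a ≤ 1 := min_le_right _ _
    have haα : a ≤ α := min_le_left _ _
    set q := p / (p-1) with hqdef
    have hpq : p.HolderConjugate q := Real.HolderConjugate.conjExponent hp1
    have hq0 : 0 < q := hpq.symm.pos
    set s := (p-1)/p + a/(2*p) with hsdef
    set t := 1 + a/(2*(p-1)) with htdef
    have ht1 : 1 < t := by rw [htdef]; nlinarith [div_pos (by linarith : (0:ℝ) < a) (by linarith : (0:ℝ) < 2*(p-1))]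
    have hst : s * q = t := by
      rw [hsdef, hqdef, htdef]
      field_simp
    have hsp : s * p = p - 1 + a/2 := by
      rw [hsdef]; field_simp
    set e := α - 1 + (1-t)*(p-1) with hedef
    have hee : e = α - 1 - a/2 := by
      rw [hedef, htdef]; field_simp; ring
    have he : -1 < e := by rw [hee]; nlinarith
    have he1 : (0:ℝ) < e + 1 := by linarith
    set C1 := 1 + 1/(t-1) with hC1def
    have hC1 : (0:ℝ) < C1 := by
      have : (0:ℝ) < t - 1 := by linarith
      positivity
    set C2 := 1 + 1/(e+1) with hC2def
    have hC2 : (0:ℝ) < C2 := by positivity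
    refine ⟨C1 ^ (p-1) * C2, by positivity, ?_⟩
    intro b hb n m hn hnm
    -- key pointwise (per μ) Hölder estimate
    have key : ∀ μ ∈ Icc n m, (∑ ν ∈ Icc μ m, b ν) ^ p ≤
        C1 ^ (p-1) * (μ:ℝ) ^ ((1-t)*(p-1)) * ∑ ν ∈ Icc μ m, (b ν * (ν:ℝ)^s) ^ p := by
      intro μ hμ
      have hμ1 : 1 ≤ μ := le_trans hn (Finset.mem_Icc.mp hμ).1
      have hμ0 : (0:ℝ) < μ := by exact_mod_cast hμ1
      set X := ∑ ν ∈ Icc μ m, (b ν * (ν:ℝ)^s) ^ p with hXdef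
      set Y := ∑ ν ∈ Icc μ m, ((ν:ℝ)^(-s)) ^ q with hYdef
      have hX0 : 0 ≤ X := Finset.sum_nonneg fun ν _ =>
        Real.rpow_nonneg (mul_nonneg (hb ν) (Real.rpow_nonneg ν.cast_nonneg _)) _
      have hY0 : 0 ≤ Y := Finset.sum_nonneg fun ν _ =>
        Real.rpow_nonneg (Real.rpow_nonneg ν.cast_nonneg _) _
      have hBeq : ∑ ν ∈ Icc μ m, b ν = ∑ ν ∈ Icc μ m, (b ν * (ν:ℝ)^s) * (ν:ℝ)^(-s) := by
        refine Finset.sum_congr rfl fun ν hν => ?_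
        have hν0 : (0:ℝ) < ν := by
          have : 1 ≤ ν := le_trans hμ1 (Finset.mem_Icc.mp hν).1
          exact_mod_cast this
        rw [mul_assoc, ← Real.rpow_add hν0, add_neg_cancel, Real.rpow_zero, mul_one]
      have hH := Real.inner_le_Lp_mul_Lq_of_nonneg (s := Icc μ m) hpq
        (f := fun ν => b ν * (ν:ℝ)^s) (g := fun ν => (ν:ℝ)^(-s))
        (fun ν _ => mul_nonneg (hb ν) (Real.rpow_nonneg ν.cast_nonneg _))
        (fun ν _ => Real.rpow_nonneg ν.cast_nonneg _)
      rw [← hBeq, ← hXdef, ← hYdef] at hH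
      have hB0 : 0 ≤ ∑ ν ∈ Icc μ m, b ν := Finset.sum_nonneg fun ν _ => hb ν
      have hYle : Y ≤ C1 * (μ:ℝ)^(1-t) := by
        have hYeq : Y = ∑ ν ∈ Icc μ m, (ν:ℝ)^(-t) := by
          refine Finset.sum_congr rfl fun ν hν => ?_
          rw [← Real.rpow_mul ν.cast_nonneg]
          congr 1
          rw [← hst]; ring
        rw [hYeq]
        exact HL_tail ht1 μ m hμ1
      have hstep : (∑ ν ∈ Icc μ m, b ν) ^ p ≤ (X ^ (1/p) * Y ^ (1/q)) ^ p :=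
        Real.rpow_le_rpow hB0 hH hp0.le
      have hexpand : (X ^ (1/p) * Y ^ (1/q)) ^ p = X * Y ^ (p/q) := by
        rw [Real.mul_rpow (Real.rpow_nonneg hX0 _) (Real.rpow_nonneg hY0 _),
          ← Real.rpow_mul hX0, ← Real.rpow_mul hY0]
        rw [one_div_mul_cancel hp0.ne', Real.rpow_one]
        congr 1
        field_simp
      have hYpq : Y ^ (p/q) ≤ (C1 * (μ:ℝ)^(1-t)) ^ (p/q) :=
        Real.rpow_le_rpow hY0 hYle (by positivity)
      have hCmu : (C1 * (μ:ℝ)^(1-t)) ^ (p/q) = C1 ^ (p-1) * (μ:ℝ)^((1-t)*(p-1)) := by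
        rw [Real.mul_rpow hC1.le (Real.rpow_nonneg hμ0.le _), ← Real.rpow_mul hμ0.le,
          hpq.div_conj_eq_sub_one]
      calc (∑ ν ∈ Icc μ m, b ν) ^ p ≤ X * Y ^ (p/q) := by rw [← hexpand]; exact hstep
        _ ≤ X * (C1 ^ (p-1) * (μ:ℝ)^((1-t)*(p-1))) := by
            rw [← hCmu]; exact mul_le_mul_of_nonneg_left hYpq hX0
        _ = C1 ^ (p-1) * (μ:ℝ)^((1-t)*(p-1)) * X := by ring
    -- main chain
    have step1 : ∑ μ ∈ Icc n m, (μ:ℝ)^(α-1) * (∑ ν ∈ Icc μ m, b ν) ^ p ≤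
        C1 ^ (p-1) * ∑ μ ∈ Icc n m, ∑ ν ∈ Icc μ m, (μ:ℝ)^e * (b ν * (ν:ℝ)^s) ^ p := by
      rw [Finset.mul_sum]
      refine Finset.sum_le_sum fun μ hμ => ?_
      have hμ1 : 1 ≤ μ := le_trans hn (Finset.mem_Icc.mp hμ).1
      have hμ0 : (0:ℝ) < μ := by exact_mod_cast hμ1
      have h2 := mul_le_mul_of_nonneg_left (key μ hμ) (Real.rpow_nonneg hμ0.le (α-1))
      refine le_trans h2 (le_of_eq ?_)
      have hμe : (μ:ℝ)^(α-1) * (μ:ℝ)^((1-t)*(p-1)) = (μ:ℝ)^e := by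
        rw [← Real.rpow_add hμ0, hedef]
      simp only [Finset.mul_sum]
      refine Finset.sum_congr rfl fun ν _ => ?_
      rw [← hμe]; ring
    have step2 : ∑ μ ∈ Icc n m, ∑ ν ∈ Icc μ m, (μ:ℝ)^e * (b ν * (ν:ℝ)^s) ^ p =
        ∑ ν ∈ Icc n m, (∑ μ ∈ Icc n ν, (μ:ℝ)^e) * (b ν * (ν:ℝ)^s) ^ p := by
      rw [HL_swap]
      exact Finset.sum_congr rfl fun ν _ => (Finset.sum_mul _ _ _).symm
    have step3 : ∑ ν ∈ Icc n m, (∑ μ ∈ Icc n ν, (μ:ℝ)^e) * (b ν * (ν:ℝ)^s) ^ p ≤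
        ∑ ν ∈ Icc n m, C2 * ((ν:ℝ)^(α-1) * ((ν:ℝ) * b ν) ^ p) := by
      refine Finset.sum_le_sum fun ν hν => ?_
      have hν1 : 1 ≤ ν := le_trans hn (Finset.mem_Icc.mp hν).1
      have hν0 : (0:ℝ) < ν := by exact_mod_cast hν1
      have hsub : ∑ μ ∈ Icc n ν, (μ:ℝ)^e ≤ ∑ μ ∈ Icc 1 ν, (μ:ℝ)^e :=
        Finset.sum_le_sum_of_subset_of_nonneg (Finset.Icc_subset_Icc_left hn)
          fun μ _ _ => Real.rpow_nonneg μ.cast_nonneg _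
      have hhead := HL_head he ν hν1
      have hterm0 : (0:ℝ) ≤ (b ν * (ν:ℝ)^s)^p :=
        Real.rpow_nonneg (mul_nonneg (hb ν) (Real.rpow_nonneg hν0.le _)) _
      have h4 : (∑ μ ∈ Icc n ν, (μ:ℝ)^e) * (b ν * (ν:ℝ)^s)^p ≤
          (C2 * (ν:ℝ)^(e+1)) * (b ν * (ν:ℝ)^s)^p :=
        mul_le_mul_of_nonneg_right (le_trans hsub hhead) hterm0
      refine le_trans h4 (le_of_eq ?_)
      -- (ν^{e+1}) * (b ν * ν^s)^p = ν^{α-1} * (ν * b ν)^p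
      have hbs : (b ν * (ν:ℝ)^s)^p = (b ν)^p * (ν:ℝ)^(s*p) := by
        rw [Real.mul_rpow (hb ν) (Real.rpow_nonneg hν0.le _), ← Real.rpow_mul hν0.le]
      have hnb : ((ν:ℝ) * b ν)^p = (ν:ℝ)^p * (b ν)^p := by
        rw [Real.mul_rpow hν0.le (hb ν)]
      have hexp : (ν:ℝ)^(e+1) * (ν:ℝ)^(s*p) = (ν:ℝ)^(α-1) * (ν:ℝ)^p := by
        rw [← Real.rpow_add hν0, ← Real.rpow_add hν0]
        congr 1
        rw [hee, hsp]; ring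
      calc (C2 * (ν:ℝ)^(e+1)) * (b ν * (ν:ℝ)^s)^p
          = C2 * ((ν:ℝ)^(e+1) * (ν:ℝ)^(s*p) * (b ν)^p) := by rw [hbs]; ring
        _ = C2 * ((ν:ℝ)^(α-1) * (ν:ℝ)^p * (b ν)^p) := by rw [hexp]
        _ = C2 * ((ν:ℝ)^(α-1) * ((ν:ℝ) * b ν)^p) := by rw [hnb]; ring
    calc ∑ μ ∈ Icc n m, (μ:ℝ)^(α-1) * (∑ ν ∈ Icc μ m, b ν) ^ p
        ≤ C1 ^ (p-1) * ∑ μ ∈ Icc n m, ∑ ν ∈ Icc μ m, (μ:ℝ)^e * (b ν * (ν:ℝ)^s) ^ p := step1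
      _ = C1 ^ (p-1) * ∑ ν ∈ Icc n m, (∑ μ ∈ Icc n ν, (μ:ℝ)^e) * (b ν * (ν:ℝ)^s) ^ p := by
          rw [step2]
      _ ≤ C1 ^ (p-1) * ∑ ν ∈ Icc n m, C2 * ((ν:ℝ)^(α-1) * ((ν:ℝ) * b ν) ^ p) := by
          refine mul_le_mul_of_nonneg_left step3 ?_
          positivity
      _ = C1 ^ (p-1) * C2 * ∑ μ ∈ Icc n m, (μ:ℝ)^(α-1) * ((μ:ℝ) * b μ) ^ p := by
          rw [← Finset.mul_sum, ← mul_assoc]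
end
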